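/- arXiv:2409.05791 — 7 statements merged into one kernel-verified Lean document; each statement's English description precedes it below -/
import Mathlib

section
/- Let A ∈ ℂ^{n×n} be Hermitian with eigenvalues λ_1 ≤ … ≤ λ_n and orthonormal eigenvectors v_1, …, v_n (A v_k = λ_k v_k). Let 1 ≤ r ≤ ℓ ≤ d ≤ n, let V ∈ ℂ^{n×d} be an isometry with v_1, …, v_ℓ ∈ Col(V), let w_1, …, w_r ∈ ℂ^d be orthonormal eigenvectors of V*AV associated with its r smallest eigenvalues, and set U := V·[w_1 … w_r] ∈ ℂ^{n×r}. Then (I − UU*) A U = 0; equivalently, for any matrix U^⊥ whose orthonormal columns span the orthogonal complement of Col(U), one has ‖(U^⊥)* A U‖ = 0. -/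
open Matrix
open scoped Matrix.Norms.L2Operator

/-- The `k`-th smallest eigenvalue (counted with multiplicity) of a Hermitian matrix. -/
noncomputable def sortedEig {m : ℕ} {M : Matrix (Fin m) (Fin m) ℂ}
    (hM : M.IsHermitian) : Fin m → ℝ :=
  hM.eigenvalues ∘ Tuple.sort hM.eigenvalues

open scoped ComplexConjugate

local notation "⟪" x ", " y "⟫" => @inner ℂ _ _ x y

/-- identity coercion from plain functions to `EuclideanSpace`. -/
def toE {N : ℕ} (x : Fin N → ℂ) : EuclideanSpace ℂ (Fin N) := WithLp.toLp 2 x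

lemma toE_ofLp {N : ℕ} (x : EuclideanSpace ℂ (Fin N)) : toE (WithLp.ofLp x) = x := rfl

lemma inner_eq_dot {N : ℕ} (x y : EuclideanSpace ℂ (Fin N)) :
    ⟪x, y⟫ = star (x : Fin N → ℂ) ⬝ᵥ (y : Fin N → ℂ) := by
  simp [PiLp.inner_apply, dotProduct, RCLike.inner_apply, Pi.star_apply, mul_comm]

lemma herm_inner_mulVec {N : ℕ} {M : Matrix (Fin N) (Fin N) ℂ} (hM : M.IsHermitian)
    (x y : EuclideanSpace ℂ (Fin N)) :
    ⟪toE (M *ᵥ x), y⟫ = ⟪x, toE (M *ᵥ y)⟫ := by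
  rw [inner_eq_dot, inner_eq_dot]
  show star (M *ᵥ x) ⬝ᵥ y = star (x : Fin N → ℂ) ⬝ᵥ (M *ᵥ y)
  rw [star_mulVec, dotProduct_mulVec, hM.eq]

lemma isometry_inner {N D : ℕ} {V : Matrix (Fin N) (Fin D) ℂ} (hV : Vᴴ * V = 1)
    (a b : EuclideanSpace ℂ (Fin D)) :
    ⟪toE (V *ᵥ a), toE (V *ᵥ b)⟫ = ⟪a, b⟫ := by
  rw [inner_eq_dot, inner_eq_dot]
  show star (V *ᵥ a) ⬝ᵥ (V *ᵥ b) = star (a : Fin D → ℂ) ⬝ᵥ (b : Fin D → ℂ)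
  rw [star_mulVec, dotProduct_mulVec, vecMul_vecMul, hV, vecMul_one]

lemma card_eig_le {d m : ℕ} {B : Matrix (Fin d) (Fin d) ℂ}
    (hB : B.IsHermitian) (c : ℝ)
    (u : Fin m → EuclideanSpace ℂ (Fin d)) (hu : Orthonormal ℂ u)
    (μ : Fin m → ℝ) (hue : ∀ j, B *ᵥ u j = (μ j : ℂ) • u j)
    (hμ : ∀ j, μ j ≤ c) :
    m ≤ (Finset.univ.filter (fun k => hB.eigenvalues k ≤ c)).card := by
  classical
  set S := Finset.univ.filter (fun k => hB.eigenvalues k ≤ c) with hS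
  by_contra hlt
  push_neg at hlt
  set bas := hB.eigenvectorBasis with hbas
  set f : Fin m → (↥S → ℂ) := fun j => fun k => ⟪(bas k.1 : EuclideanSpace ℂ (Fin d)), u j⟫ with hf
  have hnli : ¬ LinearIndependent ℂ f := by
    intro h
    have := h.fintype_card_le_finrank
    simp only [Fintype.card_fin] at this
    have hfr : Module.finrank ℂ (↥S → ℂ) = S.card := by
      simp [Module.finrank_pi]
    omega
  obtain ⟨g, hsum, j0, hj0⟩ := Fintype.not_linearIndependent_iff.mp hnli
  set y : EuclideanSpace ℂ (Fin d) := ∑ j, g j • u j with hy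
  set b : Fin d → ℂ := fun k => ⟪(bas k : EuclideanSpace ℂ (Fin d)), y⟫ with hb
  have hbS : ∀ k (hk : k ∈ S), b k = 0 := by
    intro k hk
    have h1 : b k = ∑ j, g j • f j ⟨k, hk⟩ := by
      simp only [hb, hy, inner_sum, inner_smul_right, hf, smul_eq_mul]
    rw [h1]
    have := congrFun hsum ⟨k, hk⟩
    simpa using this
  have hyb : y = ∑ k, b k • (bas k : EuclideanSpace ℂ (Fin d)) := by
    have := bas.sum_repr' y
    simp only [hb]
    exact this.symm
  have hBy1 : B *ᵥ y = ∑ j, (g j * (μ j : ℂ)) • u j := by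
    show B.mulVecLin y = _
    rw [hy]
    simp only [WithLp.ofLp_sum, WithLp.ofLp_smul, map_sum]
    refine Finset.sum_congr rfl fun j _ => ?_
    rw [LinearMap.map_smul]
    show g j • (B *ᵥ u j) = _
    rw [hue j, smul_smul, mul_comm]
  have hBy2 : B *ᵥ y = ∑ k, (b k * (hB.eigenvalues k : ℂ)) • (bas k : EuclideanSpace ℂ (Fin d)) := by
    show B.mulVecLin y = _
    conv_lhs => rw [hyb]
    simp only [WithLp.ofLp_sum, WithLp.ofLp_smul, map_sum]
    refine Finset.sum_congr rfl fun k _ => ?_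
    rw [LinearMap.map_smul]
    show b k • (B *ᵥ (bas k : EuclideanSpace ℂ (Fin d))) = _
    have hmv : B *ᵥ (bas k : EuclideanSpace ℂ (Fin d)) = hB.eigenvalues k • (bas k : EuclideanSpace ℂ (Fin d)) :=
      hB.mulVec_eigenvectorBasis k
    rw [hmv, RCLike.real_smul_eq_coe_smul (K := ℂ), smul_smul]
    congr 1
  have key1 : ⟪y, toE (B *ᵥ y)⟫ = ((∑ j, μ j * Complex.normSq (g j) : ℝ) : ℂ) := by
    conv_lhs => rw [hBy1, toE_ofLp]
    conv_lhs => rw [hy]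
    rw [hu.inner_sum]
    push_cast
    refine Finset.sum_congr rfl fun j _ => ?_
    rw [← mul_assoc, ← Complex.normSq_eq_conj_mul_self]
    push_cast; ring
  have key2 : ⟪y, toE (B *ᵥ y)⟫ = ((∑ k, hB.eigenvalues k * Complex.normSq (b k) : ℝ) : ℂ) := by
    conv_lhs => rw [hBy2, toE_ofLp]
    conv_lhs => rw [hyb]
    rw [bas.orthonormal.inner_sum]
    push_cast
    refine Finset.sum_congr rfl fun k _ => ?_
    rw [← mul_assoc, ← Complex.normSq_eq_conj_mul_self]
    push_cast; ring
  have norm1 : ⟪y, y⟫ = ((∑ j, Complex.normSq (g j) : ℝ) : ℂ) := by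
    conv_lhs => rw [hy]
    rw [hu.inner_sum]
    push_cast
    exact Finset.sum_congr rfl fun j _ => (Complex.normSq_eq_conj_mul_self).symm
  have norm2 : ⟪y, y⟫ = ((∑ k, Complex.normSq (b k) : ℝ) : ℂ) := by
    conv_lhs => rw [hyb]
    rw [bas.orthonormal.inner_sum]
    push_cast
    exact Finset.sum_congr rfl fun k _ => (Complex.normSq_eq_conj_mul_self).symm
  have E : (∑ j, μ j * Complex.normSq (g j)) = ∑ k, hB.eigenvalues k * Complex.normSq (b k) :=
    Complex.ofReal_inj.mp (key1.symm.trans key2)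
  have N : (∑ j, Complex.normSq (g j)) = ∑ k, Complex.normSq (b k) :=
    Complex.ofReal_inj.mp (norm1.symm.trans norm2)
  have hle : (∑ k, hB.eigenvalues k * Complex.normSq (b k)) ≤ c * ∑ k, Complex.normSq (b k) := by
    rw [← E, ← N, Finset.mul_sum]
    exact Finset.sum_le_sum fun j _ =>
      mul_le_mul_of_nonneg_right (hμ j) (Complex.normSq_nonneg _)
  have hterm : ∀ k', 0 ≤ (hB.eigenvalues k' - c) * Complex.normSq (b k') := by
    intro k'
    by_cases hk' : k' ∈ S
    · rw [hbS k' hk']; simp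
    · simp only [hS, Finset.mem_filter, Finset.mem_univ, true_and] at hk'
      have := not_le.mp hk'
      exact mul_nonneg (by linarith) (Complex.normSq_nonneg _)
  have hsum0 : ∑ k, (hB.eigenvalues k - c) * Complex.normSq (b k) = 0 := by
    have h1 : ∑ k, (hB.eigenvalues k - c) * Complex.normSq (b k)
        = (∑ k, hB.eigenvalues k * Complex.normSq (b k)) - c * ∑ k, Complex.normSq (b k) := by
      rw [Finset.mul_sum, ← Finset.sum_sub_distrib]
      exact Finset.sum_congr rfl fun k _ => by ring
    have h2 := Finset.sum_nonneg (fun k (_ : k ∈ Finset.univ) => hterm k)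
    linarith
  have hball : ∀ k, b k = 0 := by
    intro k
    by_cases hk : k ∈ S
    · exact hbS k hk
    · have hall := (Finset.sum_eq_zero_iff_of_nonneg (fun k' _ => hterm k')).mp hsum0 k
        (Finset.mem_univ k)
      simp only [hS, Finset.mem_filter, Finset.mem_univ, true_and] at hk
      have hne : hB.eigenvalues k - c ≠ 0 := by
        have := not_le.mp hk; intro h; linarith
      exact Complex.normSq_eq_zero.mp ((mul_eq_zero.mp hall).resolve_left hne)
  have : (∑ j, Complex.normSq (g j)) = 0 := by
    rw [N]; exact Finset.sum_eq_zero fun k _ => by rw [hball k]; simp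
  have := (Finset.sum_eq_zero_iff_of_nonneg
    (fun j (_ : j ∈ Finset.univ) => Complex.normSq_nonneg (g j))).mp this j0 (Finset.mem_univ j0)
  exact hj0 (Complex.normSq_eq_zero.mp this)

lemma sortedEig_le_of_card {d m : ℕ} {B : Matrix (Fin d) (Fin d) ℂ}
    (hB : B.IsHermitian) (c : ℝ)
    (hcard : m ≤ (Finset.univ.filter (fun k => hB.eigenvalues k ≤ c)).card)
    (j : Fin d) (hj : (j : ℕ) < m) :
    sortedEig hB j ≤ c := by
  classical
  by_contra hgt
  push_neg at hgt
  set σ := Tuple.sort hB.eigenvalues with hσ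
  set S := Finset.univ.filter (fun k => hB.eigenvalues k ≤ c) with hS
  set T := Finset.univ.filter (fun k => hB.eigenvalues (σ k) ≤ c) with hT
  have hTS : T.card = S.card := by
    refine Finset.card_bij (fun k _ => σ k) ?_ ?_ ?_
    · intro k hk
      simp only [hT, Finset.mem_filter, Finset.mem_univ, true_and] at hk
      simp [hS, hk]
    · intro k₁ _ k₂ _ h
      exact σ.injective h
    · intro k hk
      simp only [hS, Finset.mem_filter, Finset.mem_univ, true_and] at hk
      exact ⟨σ.symm k, by simp [hT, hk], by simp⟩
  have hTsub : T ⊆ Finset.Iio j := by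
    intro k hk
    simp only [hT, Finset.mem_filter, Finset.mem_univ, true_and] at hk
    rw [Finset.mem_Iio]
    by_contra hge
    push_neg at hge
    have := Tuple.monotone_sort hB.eigenvalues hge
    have : sortedEig hB j ≤ hB.eigenvalues (σ k) := this
    linarith
  have := Finset.card_le_card hTsub
  rw [Fin.card_Iio] at this
  omega

/-- Lemma 2.1 of the paper: with `U = V ⬝ [w 0 … w (r-1)]` built from orthonormal eigenvectors of
`Vᴴ A V` for its `r` smallest eigenvalues, where the isometry `V` contains the eigenvectors of `A`
for its `ℓ` smallest eigenvalues in its column space, one has `(I − U Uᴴ) A U = 0`. -/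
theorem residual_vanishes_at_interpolation_point
    (n d ℓ r : ℕ) (hr : 1 ≤ r) (hrl : r ≤ ℓ) (hld : ℓ ≤ d) (hdn : d ≤ n)
    (A : Matrix (Fin n) (Fin n) ℂ) (hA : A.IsHermitian)
    (lam : Fin n → ℝ) (hmono : Monotone lam)
    (v : Fin n → EuclideanSpace ℂ (Fin n)) (hv : Orthonormal ℂ v)
    (heig : ∀ k : Fin n, A *ᵥ v k = (lam k : ℂ) • v k)
    (V : Matrix (Fin n) (Fin d) ℂ) (hV : Vᴴ * V = 1)
    (hcol : ∀ k : Fin n, (k : ℕ) < ℓ → ∃ c : Fin d → ℂ, V *ᵥ c = v k)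
    (hred : (Vᴴ * A * V).IsHermitian)
    (w : Fin r → EuclideanSpace ℂ (Fin d)) (hw : Orthonormal ℂ w)
    (hweig : ∀ i : Fin r,
      (Vᴴ * A * V) *ᵥ w i = (sortedEig hred (Fin.castLE (hrl.trans hld) i) : ℂ) • w i)
    (U : Matrix (Fin n) (Fin r) ℂ) (hU : U = V * Matrix.of (fun p q => w q p)) :
    (1 - U * Uᴴ) * A * U = 0 := by
  classical
  have hP : (V * Vᴴ).IsHermitian := isHermitian_mul_conjTranspose_self V
  set θ : Fin r → ℝ := fun i => sortedEig hred (Fin.castLE (hrl.trans hld) i) with hθ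
  -- the eigen-coefficient family for the first ℓ eigenvectors
  have hcast : ∀ j : Fin ℓ, ((Fin.castLE (hld.trans hdn) j : Fin n) : ℕ) < ℓ := fun j => j.2
  choose uu huu using fun j : Fin ℓ => hcol (Fin.castLE (hld.trans hdn) j) (hcast j)
  -- P fixes vectors of the form V *ᵥ c
  have hPfix : ∀ c : Fin d → ℂ, (V * Vᴴ) *ᵥ (V *ᵥ c) = V *ᵥ c := by
    intro c
    rw [mulVec_mulVec, Matrix.mul_assoc, hV, Matrix.mul_one]
  -- uu are eigenvectors of B := Vᴴ A V
  have huB : ∀ j : Fin ℓ, (Vᴴ * A * V) *ᵥ uu j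
      = ((lam (Fin.castLE (hld.trans hdn) j) : ℝ) : ℂ) • uu j := by
    intro j
    have h1 : (Vᴴ * A * V) *ᵥ uu j = Vᴴ *ᵥ (A *ᵥ (V *ᵥ uu j)) := by
      simp only [mulVec_mulVec, ← Matrix.mul_assoc]
    rw [h1, huu j, heig, mulVec_smul, ← huu j, mulVec_mulVec, hV, one_mulVec]
  -- uu is orthonormal
  have huon : Orthonormal ℂ (fun j : Fin ℓ => toE (uu j)) := by
    rw [orthonormal_iff_ite]
    intro j j'
    have h1 : ⟪toE (uu j), toE (uu j')⟫
        = ⟪toE (V *ᵥ uu j), toE (V *ᵥ uu j')⟫ := (isometry_inner hV _ _).symm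
    rw [h1]
    have h2 : toE (V *ᵥ uu j) = v (Fin.castLE (hld.trans hdn) j) := by rw [huu j, toE_ofLp]
    have h2' : toE (V *ᵥ uu j') = v (Fin.castLE (hld.trans hdn) j') := by rw [huu j', toE_ofLp]
    rw [h2, h2', orthonormal_iff_ite.mp hv]
    congr 1
    simp [Fin.castLE, Fin.ext_iff]
  -- the key eigenvalue bound
  have hbound : ∀ (i : Fin r) (k : Fin n), ℓ ≤ (k : ℕ) → θ i ≤ lam k := by
    intro i k hk
    refine sortedEig_le_of_card hred (lam k) ?_ (Fin.castLE (hrl.trans hld) i)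
      (lt_of_lt_of_le i.2 hrl)
    refine card_eig_le hred (lam k) (fun j => toE (uu j)) huon
      (fun j => lam (Fin.castLE (hld.trans hdn) j)) (fun j => huB j) ?_
    intro j
    exact hmono (by simp [Fin.le_def]; omega)
  -- orthonormal basis from v
  have hnpos : 0 < n := lt_of_lt_of_le hr (hrl.trans (hld.trans hdn))
  haveI : Nonempty (Fin n) := ⟨⟨0, hnpos⟩⟩
  have hspan : ⊤ ≤ Submodule.span ℂ (Set.range v) := by
    rw [hv.linearIndependent.span_eq_top_of_card_eq_finrank (by simp)]
  set onb : OrthonormalBasis (Fin n) ℂ (EuclideanSpace ℂ (Fin n)) :=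
    OrthonormalBasis.mk hv hspan with honbdef
  have honb : ∀ k, onb k = v k := fun k => by
    rw [honbdef]; exact congrFun (OrthonormalBasis.coe_mk hv hspan) k
  -- the main eigenvector property
  have hmain : ∀ i : Fin r, A *ᵥ (V *ᵥ w i) = ((θ i : ℝ) : ℂ) • (V *ᵥ w i) := by
    intro i
    set x : Fin n → ℂ := V *ᵥ w i with hx
    have hPx : (V * Vᴴ) *ᵥ x = x := hPfix (w i)
    have hPAx : (V * Vᴴ) *ᵥ (A *ᵥ x) = ((θ i : ℝ) : ℂ) • x := by
      have h1 : (V * Vᴴ) *ᵥ (A *ᵥ x) = V *ᵥ ((Vᴴ * A * V) *ᵥ w i) := by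
        rw [hx]
        simp only [mulVec_mulVec, ← Matrix.mul_assoc]
      rw [h1, hweig i, mulVec_smul]
    set cc : Fin n → ℂ := fun k => ⟪v k, toE x⟫ with hcc
    have hAv_inner : ∀ (k : Fin n) (z : Fin n → ℂ),
        ⟪v k, toE (A *ᵥ z)⟫ = ((lam k : ℝ) : ℂ) * ⟪v k, toE z⟫ := by
      intro k z
      have h := herm_inner_mulVec hA (v k) (toE z)
      have h2 : toE (A *ᵥ toE z) = toE (A *ᵥ z) := rfl
      rw [h2] at h
      rw [← h]
      have h1 : toE (A *ᵥ v k) = ((lam k : ℝ) : ℂ) • v k := by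
        rw [heig k, ← WithLp.ofLp_smul, toE_ofLp]
      rw [h1, inner_smul_left, Complex.conj_ofReal]
    have hPv : ∀ k : Fin n, (k : ℕ) < ℓ → (V * Vᴴ) *ᵥ v k = v k := by
      intro k hk
      obtain ⟨c, hc⟩ := hcol k hk
      rw [← hc]; exact hPfix c
    -- small indices
    have hsmall : ∀ k : Fin n, (k : ℕ) < ℓ →
        ((lam k : ℝ) : ℂ) * cc k = ((θ i : ℝ) : ℂ) * cc k := by
      intro k hk
      have h1 : ⟪v k, toE (A *ᵥ x)⟫ = ((lam k : ℝ) : ℂ) * cc k := hAv_inner k x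
      have h2 : ⟪v k, toE (A *ᵥ x)⟫ = ((θ i : ℝ) : ℂ) * cc k := by
        have e1 : ⟪v k, toE (A *ᵥ x)⟫ = ⟪toE ((V * Vᴴ) *ᵥ v k), toE (A *ᵥ x)⟫ := by
          rw [hPv k hk]; rfl
        rw [e1, herm_inner_mulVec hP]
        have e2 : toE ((V * Vᴴ) *ᵥ toE (A *ᵥ x)) = toE ((V * Vᴴ) *ᵥ (A *ᵥ x)) := rfl
        rw [e2, hPAx]
        have : toE (((θ i : ℝ) : ℂ) • x) = ((θ i : ℝ) : ℂ) • toE x := rfl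
        rw [this, inner_smul_right]
      rw [← h1, h2]
    -- expansion of x
    have hxsum : toE x = ∑ k, cc k • v k := by
      have h1 := onb.sum_repr' (toE x)
      simp only [honb] at h1
      exact h1.symm
    have hinner_x : ∀ z : EuclideanSpace ℂ (Fin n),
        ⟪toE x, z⟫ = ∑ k, conj (cc k) * ⟪v k, z⟫ := by
      intro z
      conv_lhs => rw [hxsum]
      rw [sum_inner]
      exact Finset.sum_congr rfl fun k _ => by rw [inner_smul_left]
    -- the quadratic form identity
    have hquad : (∑ k, lam k * Complex.normSq (cc k)) = θ i * ∑ k, Complex.normSq (cc k) := by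
      have h1 : ⟪toE x, toE (A *ᵥ x)⟫ = ((∑ k, lam k * Complex.normSq (cc k) : ℝ) : ℂ) := by
        rw [hinner_x]
        push_cast
        refine Finset.sum_congr rfl fun k _ => ?_
        rw [hAv_inner k x]
        rw [show ⟪v k, toE x⟫ = cc k from rfl]
        rw [mul_comm (conj (cc k)), mul_assoc, Complex.mul_conj]
      have h2 : ⟪toE x, toE (A *ᵥ x)⟫
          = ((θ i : ℝ) : ℂ) * ((∑ k, Complex.normSq (cc k) : ℝ) : ℂ) := by
        have e1 : ⟪toE x, toE (A *ᵥ x)⟫ = ⟪toE ((V * Vᴴ) *ᵥ x), toE (A *ᵥ x)⟫ := by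
          rw [hPx]
        rw [e1, herm_inner_mulVec hP]
        have e2 : toE ((V * Vᴴ) *ᵥ toE (A *ᵥ x)) = toE ((V * Vᴴ) *ᵥ (A *ᵥ x)) := rfl
        rw [e2, hPAx]
        have : toE (((θ i : ℝ) : ℂ) • x) = ((θ i : ℝ) : ℂ) • toE x := rfl
        rw [this, inner_smul_right]
        congr 1
        have e4 : ⟪toE x, toE x⟫ = ((∑ k, Complex.normSq (cc k) : ℝ) : ℂ) := by
          rw [hinner_x (toE x)]
          push_cast
          refine Finset.sum_congr rfl fun k _ => ?_
          rw [show ⟪v k, toE x⟫ = cc k from rfl, ← Complex.normSq_eq_conj_mul_self]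
        exact e4
      have := h1.symm.trans h2
      rw [← Complex.ofReal_mul] at this
      exact_mod_cast this
    -- each coefficient satisfies the eigen-equation
    have hall : ∀ k : Fin n, ((lam k : ℝ) : ℂ) * cc k = ((θ i : ℝ) : ℂ) * cc k := by
      have hterm : ∀ k : Fin n, 0 ≤ (lam k - θ i) * Complex.normSq (cc k) := by
        intro k
        by_cases hk : (k : ℕ) < ℓ
        · have := hsmall k hk
          have h0 : (((lam k : ℝ) : ℂ) - ((θ i : ℝ) : ℂ)) * cc k = 0 := by
            rw [sub_mul, this, sub_self]
          rcases mul_eq_zero.mp h0 with h | h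
          · have : lam k = θ i := by
              have := sub_eq_zero.mp h
              exact_mod_cast this
            rw [this, sub_self, zero_mul]
          · rw [Complex.normSq_eq_zero.mpr h, mul_zero]
        · push_neg at hk
          exact mul_nonneg (sub_nonneg.mpr (hbound i k hk)) (Complex.normSq_nonneg _)
      have hsum0 : ∑ k, (lam k - θ i) * Complex.normSq (cc k) = 0 := by
        have h1 : ∑ k, (lam k - θ i) * Complex.normSq (cc k)
            = (∑ k, lam k * Complex.normSq (cc k)) - θ i * ∑ k, Complex.normSq (cc k) := by
          rw [Finset.mul_sum, ← Finset.sum_sub_distrib]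
          exact Finset.sum_congr rfl fun k _ => by ring
        rw [h1, hquad, sub_self]
      intro k
      have hD := (Finset.sum_eq_zero_iff_of_nonneg (fun k' _ => hterm k')).mp hsum0 k
        (Finset.mem_univ k)
      rcases mul_eq_zero.mp hD with h | h
      · have : lam k = θ i := by linarith [sub_eq_zero.mp h]
        rw [this]
      · rw [Complex.normSq_eq_zero.mp h, mul_zero, mul_zero]
    -- conclude via the orthonormal basis
    have hrepr : onb.repr (toE (A *ᵥ x)) = onb.repr (((θ i : ℝ) : ℂ) • toE x) := by
      ext k
      rw [onb.repr_apply_apply, onb.repr_apply_apply, honb]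
      have e1 : toE (A *ᵥ x) = toE (A *ᵥ x) := rfl
      rw [hAv_inner k x, inner_smul_right]
      exact hall k
    have := onb.repr.injective hrepr
    exact congrArg WithLp.ofLp this
  -- assemble the matrix identity
  set W : Matrix (Fin d) (Fin r) ℂ := Matrix.of (fun p q => w q p) with hW
  have hUHU : Uᴴ * U = 1 := by
    rw [hU, conjTranspose_mul, Matrix.mul_assoc, ← Matrix.mul_assoc Vᴴ V W, hV, Matrix.one_mul]
    ext i j
    have h1 := orthonormal_iff_ite.mp hw i j
    rw [PiLp.inner_apply] at h1
    simp only [RCLike.inner_apply] at h1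
    simp only [Matrix.mul_apply, conjTranspose_apply, hW, Matrix.of_apply, Matrix.one_apply]
    rw [← h1]
    exact Finset.sum_congr rfl fun _ _ => mul_comm _ _
  have hcolU : ∀ i : Fin r, (fun q => U q i) = V *ᵥ w i := by
    intro i
    funext q
    simp [hU, hW, Matrix.mul_apply, mulVec, dotProduct]
  have hAU : A * U = U * Matrix.diagonal (fun i => ((θ i : ℝ) : ℂ)) := by
    ext p i
    have h1 : (A * U) p i = (A *ᵥ (fun q => U q i)) p := by
      simp [Matrix.mul_apply, mulVec, dotProduct]
    rw [h1, hcolU i, hmain i, Matrix.mul_diagonal]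
    have : (V *ᵥ w i) p = U p i := by rw [← hcolU i]
    simp [Pi.smul_apply, this, mul_comm]
  rw [Matrix.mul_assoc, hAU, Matrix.sub_mul, Matrix.one_mul]
  have h2 : U * Uᴴ * (U * Matrix.diagonal (fun i => ((θ i : ℝ) : ℂ)))
      = U * Matrix.diagonal (fun i => ((θ i : ℝ) : ℂ)) := by
    rw [Matrix.mul_assoc U Uᴴ _, ← Matrix.mul_assoc Uᴴ U _, hUHU, Matrix.one_mul]
  rw [h2, sub_self]
end

section
/- Let n, m, κ, j be positive integers with m ≤ n, let D be a set, let A_1, …, A_κ ∈ ℂ^{n×n} be Hermitian, let P ∈ ℂ^{n×m} satisfy P*P = I_m, and let θ_1, …, θ_κ : D → ℝ. For ν ∈ D define M(ν) := Σ_{l=1}^κ θ_l(ν) P*A_l P and λ(ν) := λ_min(M(ν)). Let μ, μ_1, …, μ_j ∈ D and c_1, …, c_j ∈ ℝ be such that λ(μ_i) ≥ c_i for i = 1, …, j. Define Y := { y ∈ ℝ^κ : λ_min(A_l) ≤ y_l ≤ λ_max(A_l) for l = 1,…,κ, and Σ_{l=1}^κ θ_l(μ_i) y_l ≥ c_i for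 i = 1,…,j }. Then Y is nonempty and λ(μ) ≥ inf { Σ_{l=1}^κ θ_l(μ) y_l : y ∈ Y }. -/
open Matrix

private lemma sum_mulVec' {ι m n : Type*} [Fintype n] (s : Finset ι)
    (N : ι → Matrix m n ℂ) (v : n → ℂ) :
    (∑ l ∈ s, N l) *ᵥ v = ∑ l ∈ s, N l *ᵥ v := by
  ext i
  simp only [Matrix.mulVec, dotProduct, Matrix.sum_apply, Finset.sum_apply, Finset.sum_mul]
  rw [Finset.sum_comm]

private lemma rayleigh_aux {N : Type*} [Fintype N] [DecidableEq N] [Nonempty N]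
    {B : Matrix N N ℂ} (hB : B.IsHermitian) (x : N → ℂ)
    (hx : star x ⬝ᵥ x = 1) :
    (⨅ i, hB.eigenvalues i) ≤ (star x ⬝ᵥ B *ᵥ x).re ∧
      (star x ⬝ᵥ B *ᵥ x).re ≤ ⨆ i, hB.eigenvalues i := by
  set U : Matrix N N ℂ := (hB.eigenvectorUnitary : Matrix N N ℂ) with hUdef
  have hUU : U * star U = 1 := mem_unitaryGroup_iff.mp hB.eigenvectorUnitary.2
  set u : N → ℂ := star U *ᵥ x with hu
  have hsx : star u = star x ᵥ* U := by
    rw [hu, star_mulVec]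
    simp [star_eq_conjTranspose]
  have key : star x ⬝ᵥ B *ᵥ x = ∑ i, (hB.eigenvalues i : ℂ) * (star (u i) * u i) := by
    conv_lhs => rw [hB.spectral_theorem, Unitary.conjStarAlgAut_apply]
    rw [← mulVec_mulVec, ← mulVec_mulVec, dotProduct_mulVec, ← hsx, dotProduct]
    congr 1
    ext i
    rw [mulVec_diagonal]
    ring_nf
    simp [mul_comm, mul_assoc, mul_left_comm]
    exact Or.inl (Or.inl rfl)
  have hnorm : ∑ i, Complex.normSq (u i) = 1 := by
    have h1 : star u ⬝ᵥ u = 1 := by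
      calc star u ⬝ᵥ u = (star x ᵥ* U) ⬝ᵥ (star U *ᵥ x) := by rw [hsx]
        _ = ((star x ᵥ* U) ᵥ* star U) ⬝ᵥ x := dotProduct_mulVec _ _ _
        _ = star x ⬝ᵥ x := by rw [vecMul_vecMul, hUU, vecMul_one]
        _ = 1 := hx
    have h2 : ((∑ i, Complex.normSq (u i) : ℝ) : ℂ) = 1 := by
      rw [← h1, dotProduct]
      push_cast
      congr 1
      ext i
      simp [Complex.normSq_eq_conj_mul_self]
    exact_mod_cast h2
  have hre : (star x ⬝ᵥ B *ᵥ x).re = ∑ i, hB.eigenvalues i * Complex.normSq (u i) := by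
    rw [key]
    have : ∀ i, (hB.eigenvalues i : ℂ) * (star (u i) * u i)
        = ((hB.eigenvalues i * Complex.normSq (u i) : ℝ) : ℂ) := by
      intro i
      rw [Complex.star_def, ← Complex.normSq_eq_conj_mul_self]
      push_cast
      ring
    rw [Finset.sum_congr rfl fun i _ => this i, ← Complex.ofReal_sum, Complex.ofReal_re]
  constructor
  · rw [hre]
    calc (⨅ i, hB.eigenvalues i)
        = ∑ i, (⨅ i, hB.eigenvalues i) * Complex.normSq (u i) := by
          rw [← Finset.mul_sum, hnorm, mul_one]
      _ ≤ ∑ i, hB.eigenvalues i * Complex.normSq (u i) := by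
          refine Finset.sum_le_sum fun i _ => ?_
          exact mul_le_mul_of_nonneg_right (ciInf_le (Finite.bddBelow_range _) i)
            (Complex.normSq_nonneg _)
  · rw [hre]
    calc ∑ i, hB.eigenvalues i * Complex.normSq (u i)
        ≤ ∑ i, (⨆ i, hB.eigenvalues i) * Complex.normSq (u i) := by
          refine Finset.sum_le_sum fun i _ => ?_
          exact mul_le_mul_of_nonneg_right (le_ciSup (Finite.bddAbove_range _) i)
            (Complex.normSq_nonneg _)
      _ = ⨆ i, hB.eigenvalues i := by rw [← Finset.mul_sum, hnorm, mul_one]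

private lemma dotProduct_sum' {ι n : Type*} [Fintype n] (s : Finset ι)
    (v : n → ℂ) (w : ι → n → ℂ) :
    v ⬝ᵥ (∑ l ∈ s, w l) = ∑ l ∈ s, v ⬝ᵥ w l := by
  simp only [dotProduct, Finset.sum_apply, Finset.mul_sum]
  rw [Finset.sum_comm]

/-- Theorem 2.2 of the paper (SCM-type linear-programming lower bound): the smallest eigenvalue
of the projected matrix `M(μ) = Σ_l θ_l(μ) Pᴴ A_l P` is bounded below by the infimum of the
linear objective `y ↦ Σ_l θ_l(μ) y_l` over the polytope `Y` determined by the box constraints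
`λ_min(A_l) ≤ y_l ≤ λ_max(A_l)` and the cutting planes `Σ_l θ_l(μ_i) y_l ≥ c_i`, whenever
`λ_min(M(μ_i)) ≥ c_i` for each sample point `μ_i`; moreover `Y` is nonempty. -/
theorem scm_linear_program_lower_bound
    (n m κ j : ℕ) (hn : 0 < n) (hm : 0 < m) (hκ : 0 < κ) (hj : 0 < j) (hmn : m ≤ n)
    (D : Type*)
    (A : Fin κ → Matrix (Fin n) (Fin n) ℂ) (hA : ∀ l, (A l).IsHermitian)
    (P : Matrix (Fin n) (Fin m) ℂ) (hP : Pᴴ * P = 1)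
    (θ : Fin κ → D → ℝ)
    (hMH : ∀ ν : D, (∑ l, θ l ν • (Pᴴ * A l * P)).IsHermitian)
    (μ : D) (μs : Fin j → D) (c : Fin j → ℝ)
    (hc : ∀ i : Fin j, c i ≤ ⨅ k, (hMH (μs i)).eigenvalues k)
    (Y : Set (Fin κ → ℝ))
    (hY : Y = { y : Fin κ → ℝ |
        (∀ l, (⨅ i, (hA l).eigenvalues i) ≤ y l ∧ y l ≤ ⨆ i, (hA l).eigenvalues i) ∧
        ∀ i : Fin j, c i ≤ ∑ l, θ l (μs i) * y l }) :
    Y.Nonempty ∧ sInf ((fun y => ∑ l, θ l μ * y l) '' Y) ≤ ⨅ k, (hMH μ).eigenvalues k := by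
  haveI : Nonempty (Fin n) := Fin.pos_iff_nonempty.mp hn
  haveI : Nonempty (Fin m) := Fin.pos_iff_nonempty.mp hm
  haveI : Nonempty (Fin κ) := Fin.pos_iff_nonempty.mp hκ
  obtain ⟨k₀, hk₀⟩ : ∃ k, (hMH μ).eigenvalues k = ⨅ k, (hMH μ).eigenvalues k :=
    exists_eq_ciInf_of_finite
  set v : Fin m → ℂ := ⇑((hMH μ).eigenvectorBasis k₀) with hv
  have hvnorm : star v ⬝ᵥ v = 1 := by
    have h1 : ‖(hMH μ).eigenvectorBasis k₀‖ = 1 := (hMH μ).eigenvectorBasis.orthonormal.1 k₀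
    have h2 : (inner ℂ ((hMH μ).eigenvectorBasis k₀) ((hMH μ).eigenvectorBasis k₀) : ℂ)
        = star v ⬝ᵥ v := by
      rw [EuclideanSpace.inner_eq_star_dotProduct]; exact dotProduct_comm _ _
    rw [← h2, inner_self_eq_norm_sq_to_K, h1]
    norm_num
  set x : Fin n → ℂ := P *ᵥ v with hx
  have hsx : star x = star v ᵥ* Pᴴ := star_mulVec _ _
  have hxnorm : star x ⬝ᵥ x = 1 := by
    calc star x ⬝ᵥ x = (star v ᵥ* Pᴴ) ⬝ᵥ (P *ᵥ v) := by rw [hsx]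
      _ = ((star v ᵥ* Pᴴ) ᵥ* P) ⬝ᵥ v := dotProduct_mulVec _ _ _
      _ = star v ⬝ᵥ v := by rw [vecMul_vecMul, hP, vecMul_one]
      _ = 1 := hvnorm
  set y : Fin κ → ℝ := fun l => (star x ⬝ᵥ A l *ᵥ x).re with hy
  have hproj : ∀ l, star v ⬝ᵥ (Pᴴ * A l * P) *ᵥ v = star x ⬝ᵥ A l *ᵥ x := by
    intro l
    rw [← mulVec_mulVec, ← mulVec_mulVec, dotProduct_mulVec, ← hsx]
  have hq : ∀ ν : D, (star v ⬝ᵥ (∑ l, θ l ν • (Pᴴ * A l * P)) *ᵥ v).re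
      = ∑ l, θ l ν * y l := by
    intro ν
    rw [sum_mulVec', dotProduct_sum', Complex.re_sum]
    refine Finset.sum_congr rfl fun l _ => ?_
    rw [smul_mulVec, dotProduct_smul, hproj l, Complex.real_smul,
      Complex.re_ofReal_mul]
  have hyY : y ∈ Y := by
    rw [hY]
    refine ⟨fun l => rayleigh_aux (hA l) x hxnorm, fun i => ?_⟩
    calc c i ≤ ⨅ k, (hMH (μs i)).eigenvalues k := hc i
      _ ≤ (star v ⬝ᵥ (∑ l, θ l (μs i) • (Pᴴ * A l * P)) *ᵥ v).re :=
        (rayleigh_aux (hMH (μs i)) v hvnorm).1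
      _ = ∑ l, θ l (μs i) * y l := hq (μs i)
  have hval : ∑ l, θ l μ * y l = ⨅ k, (hMH μ).eigenvalues k := by
    rw [← hq μ, ← hk₀]
    have hev : (∑ l, θ l μ • (Pᴴ * A l * P)) *ᵥ v = (hMH μ).eigenvalues k₀ • v :=
      (hMH μ).mulVec_eigenvectorBasis k₀
    rw [hev, dotProduct_smul, hvnorm]
    simp [Complex.real_smul]
  set L : ℝ := ∑ l, min (θ l μ * (⨅ i, (hA l).eigenvalues i))
      (θ l μ * (⨆ i, (hA l).eigenvalues i)) with hL
  have hbdd : ∀ z ∈ (fun y => ∑ l, θ l μ * y l) '' Y, L ≤ z := by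
    rintro z ⟨y', hy', rfl⟩
    rw [hY] at hy'
    obtain ⟨hbox, -⟩ := hy'
    refine Finset.sum_le_sum fun l _ => ?_
    rcases le_or_gt 0 (θ l μ) with h | h
    · exact (min_le_left _ _).trans (mul_le_mul_of_nonneg_left (hbox l).1 h)
    · exact (min_le_right _ _).trans (mul_le_mul_of_nonpos_left (hbox l).2 h.le)
  refine ⟨⟨y, hyY⟩, ?_⟩
  calc sInf ((fun y => ∑ l, θ l μ * y l) '' Y) ≤ ∑ l, θ l μ * y l :=
        csInf_le ⟨L, hbdd⟩ ⟨y, hyY, rfl⟩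
    _ = ⨅ k, (hMH μ).eigenvalues k := hval
end

section
/- Let ℓ, r ≥ 1 be integers and λ_1 ≤ λ_2 ≤ … ≤ λ_ℓ ≤ λ_{ℓ+1} be real numbers; set Λ := diag(λ_1, …, λ_ℓ) ∈ ℝ^{ℓ×ℓ}. Let B ∈ ℂ^{ℓ×r} satisfy ‖B‖ ≤ 1. Then every eigenvalue of the (in general non-Hermitian) matrix M := (Λ − λ_1 I_ℓ) − BB*(Λ − λ_{ℓ+1} I_ℓ) is real and nonnegative; in particular the smallest eigenvalue of M is ≥ 0. -/
open Matrix
open scoped Matrix.Norms.L2Operator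

/-- Lemma 2.3(i) of the paper: for `λ_1 ≤ … ≤ λ_ℓ ≤ λ_{ℓ+1}` (encoded as a monotone
`lam : Fin (ℓ+1) → ℝ`, with `Λ = diag(λ_1, …, λ_ℓ)`) and a contraction `B` (`‖B‖ ≤ 1` in the
spectral norm), every eigenvalue of `M = (Λ − λ_1 I) − B Bᴴ (Λ − λ_{ℓ+1} I)` is real and
nonnegative. -/
theorem eigenvalues_real_nonneg_of_beta_matrix
    (ℓ r : ℕ) (hℓ : 1 ≤ ℓ) (hr : 1 ≤ r)
    (lam : Fin (ℓ + 1) → ℝ) (hmono : Monotone lam)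
    (B : Matrix (Fin ℓ) (Fin r) ℂ) (hB : ‖B‖ ≤ 1)
    (Λ : Matrix (Fin ℓ) (Fin ℓ) ℂ)
    (hΛ : Λ = Matrix.diagonal (fun i : Fin ℓ => (lam i.castSucc : ℂ)))
    (M : Matrix (Fin ℓ) (Fin ℓ) ℂ)
    (hM : M = (Λ - (lam 0 : ℂ) • 1) - B * Bᴴ * (Λ - (lam (Fin.last ℓ) : ℂ) • 1)) :
    ∀ z ∈ spectrum ℂ M, z.im = 0 ∧ 0 ≤ z.re := by
  intro z hz
  -- real data
  set d1 : Fin ℓ → ℝ := fun i => lam i.castSucc - lam 0 with hd1def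
  set e : Fin ℓ → ℝ := fun i => lam (Fin.last ℓ) - lam i.castSucc with hedef
  set s : Fin ℓ → ℝ := fun i => Real.sqrt (e i) with hsdef
  have hd1nn : ∀ i, 0 ≤ d1 i := fun i => sub_nonneg.2 (hmono (Fin.zero_le _))
  have henn : ∀ i, 0 ≤ e i := fun i => sub_nonneg.2 (hmono (Fin.le_last _))
  set S : Matrix (Fin ℓ) (Fin ℓ) ℂ := Matrix.diagonal (fun i => (s i : ℂ)) with hSdef
  set D : Matrix (Fin ℓ) (Fin ℓ) ℂ := Matrix.diagonal (fun i => (d1 i : ℂ)) with hDdef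
  set E : Matrix (Fin ℓ) (Fin ℓ) ℂ := Matrix.diagonal (fun i => (e i : ℂ)) with hEdef
  have hSS : S * S = E := by
    rw [hSdef, hEdef, Matrix.diagonal_mul_diagonal]
    exact congrArg Matrix.diagonal (funext fun i => by
      rw [← Complex.ofReal_mul, Real.mul_self_sqrt (henn i)])
  have hSH : Sᴴ = S := by
    rw [hSdef, Matrix.diagonal_conjTranspose]
    exact congrArg Matrix.diagonal (funext fun i => by
      simp [Complex.conj_ofReal])
  -- rewrite M
  have hM' : M = D + B * Bᴴ * E := by
    subst hM hΛ
    rw [Matrix.smul_one_eq_diagonal, Matrix.smul_one_eq_diagonal,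
      Matrix.diagonal_sub, Matrix.diagonal_sub]
    have h1 : (Matrix.diagonal (fun i : Fin ℓ => (lam i.castSucc : ℂ) - (lam 0 : ℂ))) = D := by
      rw [hDdef]
      exact congrArg Matrix.diagonal (funext fun i => by push_cast [hd1def]; ring)
    have h2 : (Matrix.diagonal (fun i : Fin ℓ => (lam i.castSucc : ℂ) - (lam (Fin.last ℓ) : ℂ)))
        = -E := by
      rw [hEdef, Matrix.diagonal_neg]
      exact congrArg Matrix.diagonal (funext fun i => by push_cast [hedef]; ring)
    rw [h1, h2, Matrix.mul_neg, sub_neg_eq_add]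
  -- extract an eigenvector of M
  rw [spectrum.mem_iff, Algebra.algebraMap_eq_smul_one] at hz
  have hdet : (z • (1 : Matrix (Fin ℓ) (Fin ℓ) ℂ) - M).det = 0 := by
    by_contra h
    exact hz ((Matrix.isUnit_iff_isUnit_det _).2 (isUnit_iff_ne_zero.2 h))
  obtain ⟨v, hv0, hv⟩ := (Matrix.exists_mulVec_eq_zero_iff).2 hdet
  have hMv : M *ᵥ v = z • v := by
    have := hv
    rw [Matrix.sub_mulVec, Matrix.smul_mulVec, Matrix.one_mulVec, sub_eq_zero] at this
    exact this.symm
  -- the Hermitian PSD matrix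
  set H : Matrix (Fin ℓ) (Fin ℓ) ℂ := D + (S * B) * (S * B)ᴴ with hHdef
  have hCH : (S * B)ᴴ = Bᴴ * S := by rw [Matrix.conjTranspose_mul, hSH]
  -- find an eigenvector of H
  have key : ∃ u : Fin ℓ → ℂ, u ≠ 0 ∧ H *ᵥ u = z • u := by
    by_cases hw : S *ᵥ v = 0
    · refine ⟨v, hv0, ?_⟩
      have hEv : E *ᵥ v = 0 := by
        rw [← hSS, ← Matrix.mulVec_mulVec, hw, Matrix.mulVec_zero]
      have hDv : D *ᵥ v = z • v := by
        have h : M *ᵥ v = D *ᵥ v := by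
          rw [hM', Matrix.add_mulVec]
          simp only [← Matrix.mulVec_mulVec]
          rw [hEv]
          simp only [Matrix.mulVec_zero, add_zero]
        rw [← h, hMv]
      have hCv : ((S * B) * (S * B)ᴴ) *ᵥ v = 0 := by
        rw [hCH]
        simp only [← Matrix.mulVec_mulVec]
        rw [hw]
        simp only [Matrix.mulVec_zero]
      rw [hHdef, Matrix.add_mulVec, hDv, hCv, add_zero]
    · refine ⟨S *ᵥ v, hw, ?_⟩
      have hDS : S * D = D * S := by
        rw [hSdef, hDdef, Matrix.diagonal_mul_diagonal, Matrix.diagonal_mul_diagonal]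
        exact congrArg Matrix.diagonal (funext fun i => mul_comm _ _)
      have hHS : H * S = S * M := by
        rw [hHdef, hM', Matrix.mul_add, Matrix.add_mul, hDS, hCH]
        congr 1
        rw [← hSS]
        simp only [Matrix.mul_assoc]
      rw [Matrix.mulVec_mulVec, hHS, ← Matrix.mulVec_mulVec, hMv, Matrix.mulVec_smul]
  obtain ⟨u, hu0, hu⟩ := key
  -- inner-product computation
  set y : Fin r → ℂ := (S * B)ᴴ *ᵥ u with hydef
  set a : ℝ := ∑ i, d1 i * Complex.normSq (u i) with hadef
  set b : ℝ := ∑ j, Complex.normSq (y j) with hbdef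
  set n : ℝ := ∑ i, Complex.normSq (u i) with hndef
  have hDterm : star u ⬝ᵥ (D *ᵥ u) = (a : ℂ) := by
    rw [hadef]; push_cast
    rw [dotProduct]
    refine Finset.sum_congr rfl fun i _ => ?_
    rw [Matrix.mulVec_diagonal, Pi.star_apply]
    have h : star (u i) * ((d1 i : ℂ) * u i) = (d1 i : ℂ) * (u i * star (u i)) := by ring
    rw [h, Complex.star_def, Complex.mul_conj]
  have hCterm : star u ⬝ᵥ (((S * B) * (S * B)ᴴ) *ᵥ u) = (b : ℂ) := by
    have h1 : star u ᵥ* (S * B) = star y := by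
      rw [hydef, Matrix.star_mulVec, Matrix.conjTranspose_conjTranspose]
    rw [← Matrix.mulVec_mulVec, Matrix.dotProduct_mulVec, h1, ← hydef, hbdef]
    push_cast
    rw [dotProduct]
    refine Finset.sum_congr rfl fun j _ => ?_
    rw [Pi.star_apply, Complex.star_def, mul_comm, Complex.mul_conj]
  have hnterm : star u ⬝ᵥ u = (n : ℂ) := by
    rw [hndef]; push_cast
    rw [dotProduct]
    refine Finset.sum_congr rfl fun i _ => ?_
    rw [Pi.star_apply, Complex.star_def, mul_comm, Complex.mul_conj]
  have heq : ((a + b : ℝ) : ℂ) = z * n := by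
    have h1 : star u ⬝ᵥ (H *ᵥ u) = (a : ℂ) + b := by
      rw [hHdef, Matrix.add_mulVec, dotProduct_add, hDterm, hCterm]
    have h2 : star u ⬝ᵥ (H *ᵥ u) = z * n := by
      rw [hu, dotProduct_smul, hnterm, smul_eq_mul]
    push_cast
    rw [← h1, h2]
  have ha : 0 ≤ a := Finset.sum_nonneg fun i _ =>
    mul_nonneg (hd1nn i) (Complex.normSq_nonneg _)
  have hb : 0 ≤ b := Finset.sum_nonneg fun j _ => Complex.normSq_nonneg _
  have hn : 0 < n := by
    obtain ⟨i, hi⟩ := Function.ne_iff.1 hu0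
    exact Finset.sum_pos' (fun i _ => Complex.normSq_nonneg _)
      ⟨i, Finset.mem_univ i, Complex.normSq_pos.2 hi⟩
  have him : z.im * n = 0 := by
    have := congrArg Complex.im heq
    simpa [Complex.mul_im] using this.symm
  have hre : z.re * n = a + b := by
    have := congrArg Complex.re heq
    simpa [Complex.mul_re] using this.symm
  constructor
  · rcases mul_eq_zero.1 him with h | h
    · exact h
    · exact absurd h (ne_of_gt hn)
  · nlinarith
end

section
/- Let ℓ, r ≥ 1 be integers and λ_1 < λ_2 ≤ … ≤ λ_ℓ < λ_{ℓ+1} be real numbers (for ℓ = 1 the condition is λ_1 < λ_2); set Λ := diag(λ_1, …, λ_ℓ). Let B ∈ ℂ^{ℓ×r} satisfy ‖B‖ ≤ 1, B_{1,1} = c with |c| = 1, B_{1,k} = 0 for all k ≥ 2, and B_{k,1} = 0 for all k ≥ 2. Then every eigenvalue of M := (Λ − λ_1 I_ℓ) − BB*(Λ − λ_{ℓ+1} I_ℓ) is real and strictly positive. -/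
open Matrix
open scoped Matrix.Norms.L2Operator

/-- Lemma 2.3(iii) of the paper: for `λ_1 < λ_2 ≤ … ≤ λ_ℓ < λ_{ℓ+1}` (encoded through a monotone
`lam : Fin (ℓ+1) → ℝ`) and a contraction `B` whose first row and first column vanish except for a
unimodular `(1,1)` entry `c`, every eigenvalue of `M = (Λ − λ_1 I) − B Bᴴ (Λ − λ_{ℓ+1} I)` is real
and strictly positive. -/
theorem eigenvalues_real_pos_of_beta_matrix_simple
    (ℓ r : ℕ) (hℓ : 1 ≤ ℓ) (hr : 1 ≤ r)
    (lam : Fin (ℓ + 1) → ℝ) (hmono : Monotone lam)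
    (h12 : lam 0 < lam ⟨1, by omega⟩)
    (htop : lam ⟨ℓ - 1, by omega⟩ < lam (Fin.last ℓ))
    (B : Matrix (Fin ℓ) (Fin r) ℂ) (hB : ‖B‖ ≤ 1)
    (c : ℂ) (hc : ‖c‖ = 1)
    (hB11 : B ⟨0, by omega⟩ ⟨0, by omega⟩ = c)
    (hBrow : ∀ q : Fin r, (q : ℕ) ≠ 0 → B ⟨0, by omega⟩ q = 0)
    (hBcol : ∀ p : Fin ℓ, (p : ℕ) ≠ 0 → B p ⟨0, by omega⟩ = 0)
    (Λ : Matrix (Fin ℓ) (Fin ℓ) ℂ)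
    (hΛ : Λ = Matrix.diagonal (fun i : Fin ℓ => (lam i.castSucc : ℂ)))
    (M : Matrix (Fin ℓ) (Fin ℓ) ℂ)
    (hM : M = (Λ - (lam 0 : ℂ) • 1) - B * Bᴴ * (Λ - (lam (Fin.last ℓ) : ℂ) • 1)) :
    ∀ z ∈ spectrum ℂ M, z.im = 0 ∧ 0 < z.re := by
  intro z hz
  set i0 : Fin ℓ := ⟨0, by omega⟩ with hi0
  set q0 : Fin r := ⟨0, by omega⟩ with hq0
  -- the positive diagonal entries of λ_{ℓ+1} I − Λ and their square roots
  set d : Fin ℓ → ℝ := fun i => lam (Fin.last ℓ) - lam i.castSucc with hd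
  have hdpos : ∀ i, 0 < d i := by
    intro i
    have h1 : lam i.castSucc ≤ lam ⟨ℓ - 1, by omega⟩ := by
      apply hmono
      simp only [Fin.le_def, Fin.coe_castSucc]
      omega
    have := htop
    simp only [hd]
    linarith
  set s : Fin ℓ → ℝ := fun i => Real.sqrt (d i) with hs
  have hspos : ∀ i, 0 < s i := fun i => Real.sqrt_pos.2 (hdpos i)
  set S : Matrix (Fin ℓ) (Fin ℓ) ℂ := Matrix.diagonal (fun i => (s i : ℂ)) with hS
  -- the nonnegative diagonal entries of Λ − λ_1 I
  set e : Fin ℓ → ℝ := fun i => lam i.castSucc - lam 0 with he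
  have hennneg : ∀ i, 0 ≤ e i := by
    intro i
    have : lam 0 ≤ lam i.castSucc := hmono (by simp [Fin.le_def])
    simp only [he]; linarith
  have hepos : ∀ i : Fin ℓ, i ≠ i0 → 0 < e i := by
    intro i hi
    have h1 : lam ⟨1, by omega⟩ ≤ lam i.castSucc := by
      apply hmono
      simp only [Fin.le_def, Fin.coe_castSucc]
      have : (i : ℕ) ≠ 0 := fun h => hi (Fin.ext (by simpa using h))
      omega
    simp only [he]; linarith
  -- S * S = λ_{ℓ+1} I − Λ
  have hL : Λ - (lam 0 : ℂ) • 1 = Matrix.diagonal (fun i => (e i : ℂ)) := by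
    rw [hΛ, Matrix.smul_one_eq_diagonal]
    ext i j
    rcases eq_or_ne i j with h | h
    · subst h; simp [Matrix.diagonal_apply_eq, he]
    · simp [Matrix.diagonal_apply_ne _ h]
  have hSS : S * S = (lam (Fin.last ℓ) : ℂ) • 1 - Λ := by
    rw [hS, hΛ, Matrix.diagonal_mul_diagonal, Matrix.smul_one_eq_diagonal]
    ext i j
    rcases eq_or_ne i j with h | h
    · subst h
      have hmul : s i * s i = d i := Real.mul_self_sqrt (hdpos i).le
      simp only [Matrix.diagonal_apply_eq, Matrix.sub_apply]
      rw [show ((s i : ℂ) * (s i : ℂ)) = ((s i * s i : ℝ) : ℂ) by push_cast; ring,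
        hmul, hd]
      push_cast; ring
    · simp [Matrix.diagonal_apply_ne _ h]
  -- similarity:  S * M = H * S with H Hermitian PSD
  set H : Matrix (Fin ℓ) (Fin ℓ) ℂ :=
    (Λ - (lam 0 : ℂ) • 1) + S * B * Bᴴ * S with hH
  have hkey : S * M = H * S := by
    have hXS : S * (Λ - (lam 0 : ℂ) • 1) = (Λ - (lam 0 : ℂ) • 1) * S := by
      rw [hL, hS, Matrix.diagonal_mul_diagonal, Matrix.diagonal_mul_diagonal]
      ext i j
      rcases eq_or_ne i j with h | h
      · subst h; simp only [Matrix.diagonal_apply_eq]; ring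
      · simp [Matrix.diagonal_apply_ne _ h]
    have h2 : S * (B * Bᴴ * (Λ - (lam (Fin.last ℓ) : ℂ) • 1)) =
        -(S * B * Bᴴ * S * S) := by
      have hneg : Λ - (lam (Fin.last ℓ) : ℂ) • 1 = -(S * S) := by
        rw [hSS, neg_sub]
      rw [hneg]
      simp only [mul_neg, Matrix.mul_assoc]
    rw [hM, mul_sub, hXS, h2, sub_neg_eq_add, hH, add_mul]
  -- extract an eigenvector
  have hz' : ¬ IsUnit (algebraMap ℂ (Matrix (Fin ℓ) (Fin ℓ) ℂ) z - M) :=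
    spectrum.mem_iff.mp hz
  have hdet : (algebraMap ℂ (Matrix (Fin ℓ) (Fin ℓ) ℂ) z - M).det = 0 := by
    by_contra h
    exact hz' ((Matrix.isUnit_iff_isUnit_det _).2 (isUnit_iff_ne_zero.2 h))
  obtain ⟨v, hv0, hveq⟩ := (Matrix.exists_mulVec_eq_zero_iff).2 hdet
  have hMv : M.mulVec v = z • v := by
    have halg : algebraMap ℂ (Matrix (Fin ℓ) (Fin ℓ) ℂ) z = z • 1 := by
      rw [Matrix.algebraMap_eq_diagonal]
      rw [Matrix.smul_one_eq_diagonal]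
      rfl
    rw [halg, Matrix.sub_mulVec, Matrix.smul_mulVec, Matrix.one_mulVec,
      sub_eq_zero] at hveq
    exact hveq.symm
  set w : Fin ℓ → ℂ := S.mulVec v with hw
  have hwi : ∀ i, w i = (s i : ℂ) * v i := by
    intro i; simp [hw, hS, Matrix.mulVec_diagonal]
  have hw0 : w ≠ 0 := by
    intro hcon
    apply hv0
    funext i
    have := congrFun hcon i
    rw [hwi i] at this
    have hs0 : (s i : ℂ) ≠ 0 := by
      exact_mod_cast (hspos i).ne'
    simpa [hs0] using this
  have hHw : H.mulVec w = z • w := by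
    calc H.mulVec (S.mulVec v) = (H * S).mulVec v := by rw [Matrix.mulVec_mulVec]
    _ = (S * M).mulVec v := by rw [hkey]
    _ = S.mulVec (M.mulVec v) := by rw [Matrix.mulVec_mulVec]
    _ = S.mulVec (z • v) := by rw [hMv]
    _ = z • S.mulVec v := by rw [Matrix.mulVec_smul]
  -- quadratic form computations
  set w2 : Fin ℓ → ℂ := S.mulVec w with hw2
  set u : Fin r → ℂ := Bᴴ.mulVec w2 with hu
  set t : ℝ := ∑ i, Complex.normSq (w i) with ht
  set a : ℝ := ∑ i, e i * Complex.normSq (w i) with ha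
  set b : ℝ := ∑ q, Complex.normSq (u q) with hb
  have hsws : star w ⬝ᵥ w = (t : ℂ) := by
    simp only [dotProduct, Pi.star_apply, ht]
    push_cast
    congr 1; funext i
    rw [RCLike.star_def, mul_comm, Complex.mul_conj]
  have hq1 : star w ⬝ᵥ (Λ - (lam 0 : ℂ) • 1).mulVec w = (a : ℂ) := by
    rw [hL]
    simp only [dotProduct, Matrix.mulVec_diagonal, Pi.star_apply, ha]
    push_cast
    congr 1; funext i
    rw [RCLike.star_def]
    rw [show (starRingEnd ℂ) (w i) * ((e i : ℂ) * w i)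
        = (e i : ℂ) * (w i * (starRingEnd ℂ) (w i)) by ring, Complex.mul_conj]
  have hq2 : star w ⬝ᵥ (S * B * Bᴴ * S).mulVec w = (b : ℂ) := by
    have hstep : (S * B * Bᴴ * S).mulVec w = S.mulVec (B.mulVec u) := by
      rw [hu, hw2, ← Matrix.mulVec_mulVec, ← Matrix.mulVec_mulVec,
        ← Matrix.mulVec_mulVec]
    rw [hstep]
    have hmove : star w ⬝ᵥ S.mulVec (B.mulVec u) = star w2 ⬝ᵥ B.mulVec u := by
      simp only [dotProduct, Pi.star_apply, hw2, hS, Matrix.mulVec_diagonal]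
      refine Finset.sum_congr rfl fun i _ => ?_
      simp only [RCLike.star_def, _root_.map_mul, Complex.conj_ofReal]
      ring
    have hvec : Matrix.vecMul (star w2) B = star u := by
      funext q
      simp only [Matrix.vecMul, dotProduct, Pi.star_apply, hu,
        Matrix.mulVec, Matrix.conjTranspose_apply, star_sum]
      refine Finset.sum_congr rfl fun i _ => ?_
      rw [star_star_mul]
    rw [hmove, Matrix.dotProduct_mulVec, hvec]
    simp only [dotProduct, Pi.star_apply, hb]
    push_cast
    congr 1; funext q
    rw [RCLike.star_def, mul_comm, Complex.mul_conj]
  have hquad : z * (t : ℂ) = ((a + b : ℝ) : ℂ) := by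
    have h1 : star w ⬝ᵥ H.mulVec w = z * (t : ℂ) := by
      rw [hHw, dotProduct_smul, hsws, smul_eq_mul]
    have h2 : star w ⬝ᵥ H.mulVec w = ((a + b : ℝ) : ℂ) := by
      rw [hH, Matrix.add_mulVec, dotProduct_add, hq1, hq2,
        Complex.ofReal_add]
    rw [← h1, h2]
  -- positivity of t
  have htpos : 0 < t := by
    have hwex : ∃ i, w i ≠ 0 := by
      by_contra hcon
      push_neg at hcon
      exact hw0 (funext hcon)
    obtain ⟨i, hi⟩ := hwex
    apply Finset.sum_pos' (fun j _ => Complex.normSq_nonneg _)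
    exact ⟨i, Finset.mem_univ i, Complex.normSq_pos.2 hi⟩
  -- positivity of a + b
  have hab : 0 < a + b := by
    have hannneg : 0 ≤ a :=
      Finset.sum_nonneg fun i _ =>
        mul_nonneg (hennneg i) (Complex.normSq_nonneg _)
    have hbnneg : 0 ≤ b := Finset.sum_nonneg fun q _ => Complex.normSq_nonneg _
    by_cases hcase : ∃ i, i ≠ i0 ∧ w i ≠ 0
    · obtain ⟨i, hi, hwi0⟩ := hcase
      have hapos : 0 < a := by
        apply Finset.sum_pos' (fun j _ =>
          mul_nonneg (hennneg j) (Complex.normSq_nonneg _))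
        exact ⟨i, Finset.mem_univ i,
          mul_pos (hepos i hi) (Complex.normSq_pos.2 hwi0)⟩
      linarith
    · push_neg at hcase
      have hwi0 : w i0 ≠ 0 := by
        intro hcon
        apply hw0
        funext i
        by_cases hii : i = i0
        · rw [hii]; exact hcon
        · exact hcase i hii
      have hu0 : u q0 ≠ 0 := by
        have : u q0 = (starRingEnd ℂ) c * ((s i0 : ℂ) * w i0) := by
          rw [hu, Matrix.mulVec, dotProduct]
          rw [Finset.sum_eq_single i0]
          · simp only [Matrix.conjTranspose_apply, hw2, hS, Matrix.mulVec_diagonal]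
            rw [hi0, hq0, hB11, RCLike.star_def]
          · intro i _ hi
            rw [show w2 i = (s i : ℂ) * w i by
              simp [hw2, hS, Matrix.mulVec_diagonal], hcase i hi]
            ring
          · intro h; exact absurd (Finset.mem_univ i0) h
        rw [this]
        apply mul_ne_zero
        · simp only [ne_eq, map_eq_zero]
          intro hcon; rw [hcon] at hc; simp at hc
        · apply mul_ne_zero _ hwi0
          exact_mod_cast (hspos i0).ne'
      have hbpos : 0 < b := by
        apply Finset.sum_pos' (fun q _ => Complex.normSq_nonneg _)
        exact ⟨q0, Finset.mem_univ q0, Complex.normSq_pos.2 hu0⟩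
      linarith
  -- conclude
  have hzval : z = (((a + b) / t : ℝ) : ℂ) := by
    have htne : (t : ℂ) ≠ 0 := by exact_mod_cast htpos.ne'
    rw [Complex.ofReal_div]
    exact (eq_div_iff htne).mpr hquad
  constructor
  · rw [hzval]; exact Complex.ofReal_im _
  · rw [hzval, Complex.ofReal_re]
    exact div_pos hab htpos
end

section
/- Let A ∈ ℂ^{n×n} be Hermitian with eigenvalues λ_1 ≤ … ≤ λ_n and orthonormal eigenvectors v_1, …, v_n (A v_k = λ_k v_k). Let 1 ≤ r ≤ ℓ ≤ d ≤ n, let V ∈ ℂ^{n×d} be an isometry with v_1, …, v_ℓ ∈ Col(V), let w_1, …, w_r be orthonormal eigenvectors of V*AV associated with its r smallest eigenvalues, set U := V·[w_1 … w_r] and ρ := ‖(I − UU*) A U‖, and let a := λ_min(V*AV). Then for every real η with η ≥ λ_1, the lower-bound value f(η) := min{a, η} − 2ρ² / ( |a − η| + √( |a − η|² + 4ρ² ) ) (with the convention that the fraction equals 0 when its denominator is 0) satisfies f(η) = λ_1. -/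
open Matrix
open scoped Matrix.Norms.L2Operator

section Aux
open Matrix Complex

variable {n d : ℕ}

lemma adj_dot (B : Matrix (Fin n) (Fin d) ℂ) (x : Fin n → ℂ) (y : Fin d → ℂ) :
    star x ⬝ᵥ (B *ᵥ y) = star (Bᴴ *ᵥ x) ⬝ᵥ y := by
  rw [star_mulVec, conjTranspose_conjTranspose, dotProduct_mulVec]

lemma adj_dot' (B : Matrix (Fin n) (Fin d) ℂ) (x : Fin d → ℂ) (y : Fin n → ℂ) :
    star (B *ᵥ x) ⬝ᵥ y = star x ⬝ᵥ (Bᴴ *ᵥ y) := by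
  rw [adj_dot Bᴴ, conjTranspose_conjTranspose]

lemma dot_conj_comm (x y : Fin n → ℂ) :
    star x ⬝ᵥ y = starRingEnd ℂ (star y ⬝ᵥ x) := by
  simp [dotProduct, Finset.sum_comm, map_sum, mul_comm]

lemma iso_dot {V : Matrix (Fin n) (Fin d) ℂ} (hV : Vᴴ * V = 1)
    (a b : Fin d → ℂ) : star (V *ᵥ a) ⬝ᵥ (V *ᵥ b) = star a ⬝ᵥ b := by
  rw [adj_dot', mulVec_mulVec, hV, one_mulVec]

lemma dotProduct_sum'_s7 {ι : Type*} (s : Finset ι) (u : Fin d → ℂ) (f : ι → Fin d → ℂ) :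
    u ⬝ᵥ (∑ j ∈ s, f j) = ∑ j ∈ s, u ⬝ᵥ f j := by
  simp only [dotProduct, Finset.sum_apply, Finset.mul_sum]
  exact Finset.sum_comm

lemma dot_expand {ι : Type*} [Fintype ι] [DecidableEq ι] (c : ι → Fin d → ℂ)
    (horth : ∀ j k, star (c j) ⬝ᵥ c k = if j = k then 1 else 0)
    (a : ι → ℂ) (k : ι) : star (c k) ⬝ᵥ (∑ j, a j • c j) = a k := by
  rw [dotProduct_sum'_s7]
  simp only [dotProduct_smul, horth, smul_eq_mul, mul_ite, mul_one, mul_zero]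
  simp

section spec
variable {A : Matrix (Fin n) (Fin n) ℂ} {lam : Fin n → ℝ} {v : Fin n → Fin n → ℂ}

lemma spec_expand (horth : ∀ j k, star (v j) ⬝ᵥ v k = if j = k then 1 else 0)
    (z : Fin n → ℂ) : z = ∑ k, (star (v k) ⬝ᵥ z) • v k := by
  set Q : Matrix (Fin n) (Fin n) ℂ := Matrix.of fun j i => v i j with hQdef
  have hQ : Qᴴ * Q = 1 := by
    ext i j
    simpa [hQdef, Matrix.mul_apply, Matrix.one_apply, dotProduct, conjTranspose_apply]
      using horth i j
  have hQQ : Q * Qᴴ = 1 := mul_eq_one_comm.mp hQ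
  have hz : Q *ᵥ (Qᴴ *ᵥ z) = z := by rw [mulVec_mulVec, hQQ, one_mulVec]
  conv_lhs => rw [← hz]
  funext j
  simp only [mulVec, dotProduct, Finset.sum_apply, Pi.smul_apply, smul_eq_mul]
  refine Finset.sum_congr rfl fun k _ => ?_
  simp only [hQdef, Matrix.of_apply, conjTranspose_apply, Matrix.of_apply, Pi.star_apply,
    Finset.mul_sum, Finset.sum_mul]
  refine Finset.sum_congr rfl fun x _ => ?_
  ring

lemma spec_mulVec (horth : ∀ j k, star (v j) ⬝ᵥ v k = if j = k then 1 else 0)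
    (heig : ∀ k, A *ᵥ v k = (lam k : ℂ) • v k) (z : Fin n → ℂ) :
    A *ᵥ z = ∑ k, ((lam k : ℂ) * (star (v k) ⬝ᵥ z)) • v k := by
  conv_lhs => rw [spec_expand horth z, ← mulVecLin_apply, map_sum]
  refine Finset.sum_congr rfl fun k _ => ?_
  rw [_root_.map_smul, mulVecLin_apply, heig k, smul_smul, mul_comm]

lemma spec_quadA (horth : ∀ j k, star (v j) ⬝ᵥ v k = if j = k then 1 else 0)
    (heig : ∀ k, A *ᵥ v k = (lam k : ℂ) • v k) (z : Fin n → ℂ) :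
    star z ⬝ᵥ (A *ᵥ z) = ∑ k, (lam k : ℂ) * ((normSq (star (v k) ⬝ᵥ z) : ℝ) : ℂ) := by
  rw [spec_mulVec horth heig, dotProduct_sum'_s7]
  refine Finset.sum_congr rfl fun k _ => ?_
  rw [dotProduct_smul, smul_eq_mul, dot_conj_comm (x := z) (y := v k)]
  rw [mul_assoc, Complex.mul_conj]

lemma spec_norm (horth : ∀ j k, star (v j) ⬝ᵥ v k = if j = k then 1 else 0)
    (z : Fin n → ℂ) :
    star z ⬝ᵥ z = ∑ k, ((normSq (star (v k) ⬝ᵥ z) : ℝ) : ℂ) := by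
  nth_rewrite 2 [spec_expand horth z]
  rw [dotProduct_sum'_s7]
  refine Finset.sum_congr rfl fun k _ => ?_
  rw [dotProduct_smul, smul_eq_mul, dot_conj_comm (x := z) (y := v k)]
  exact Complex.mul_conj _

lemma spec_eigvec (horth : ∀ j k, star (v j) ⬝ᵥ v k = if j = k then 1 else 0)
    (heig : ∀ k, A *ᵥ v k = (lam k : ℂ) • v k) (z : Fin n → ℂ) (θ : ℂ)
    (h : ∀ k, (lam k : ℂ) * (star (v k) ⬝ᵥ z) = θ * (star (v k) ⬝ᵥ z)) :
    A *ᵥ z = θ • z := by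
  rw [spec_mulVec horth heig z]
  conv_rhs => rw [spec_expand horth z, Finset.smul_sum]
  refine Finset.sum_congr rfl fun k _ => ?_
  rw [h k, smul_smul]

end spec

lemma dot_comb {ι : Type*} (s : Finset ι) (c : ι → Fin d → ℂ) (t : ι → ℂ) (x : Fin d → ℂ) :
    star x ⬝ᵥ (∑ k ∈ s, t k • c k) = ∑ k ∈ s, t k * starRingEnd ℂ (star (c k) ⬝ᵥ x) := by
  rw [dotProduct_sum'_s7]
  refine Finset.sum_congr rfl fun k _ => ?_
  rw [dotProduct_smul, smul_eq_mul, dot_conj_comm (x := x) (y := c k)]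

lemma counting {d m : ℕ} {M : Matrix (Fin d) (Fin d) ℂ} (hM : M.IsHermitian)
    (c : Fin m → Fin d → ℂ)
    (horth : ∀ j k, star (c j) ⬝ᵥ c k = if j = k then 1 else 0)
    (ν : Fin m → ℝ) (heigc : ∀ k, M *ᵥ c k = (ν k : ℂ) • c k)
    (cc : ℝ) (hν : ∀ k, ν k ≤ cc) :
    m ≤ (Finset.univ.filter fun i => hM.eigenvalues i ≤ cc).card := by
  classical
  set μ : Fin d → ℝ := hM.eigenvalues with hμ
  set u : Fin d → Fin d → ℂ := fun i => hM.eigenvectorBasis i with hu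
  have horthu : ∀ i j, star (u i) ⬝ᵥ u j = if i = j then 1 else 0 := by
    intro i j
    have := orthonormal_iff_ite.mp hM.eigenvectorBasis.orthonormal i j
    rw [EuclideanSpace.inner_eq_star_dotProduct] at this; rw [dotProduct_comm]; exact this
  have heigu : ∀ i, M *ᵥ u i = (μ i : ℂ) • u i := by
    intro i
    have := hM.mulVec_eigenvectorBasis i
    rw [RCLike.real_smul_eq_coe_smul (K := ℂ)] at this
    exact this
  set G : Finset (Fin d) := Finset.univ.filter (fun i => ¬ μ i ≤ cc) with hG
  have hμG : ∀ i ∈ G, cc < μ i := by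
    intro i hi
    rw [hG, Finset.mem_filter] at hi
    exact lt_of_not_ge hi.2
  have hli : LinearIndependent ℂ (Sum.elim c (fun i : {i // i ∈ G} => u i)) := by
    rw [Fintype.linearIndependent_iff]
    intro g hg
    rw [Fintype.sum_sum_type] at hg
    simp only [Sum.elim_inl, Sum.elim_inr] at hg
    set b : Fin d → ℂ := fun i => if h : i ∈ G then g (Sum.inr ⟨i, h⟩) else 0 with hb
    set x : Fin d → ℂ := ∑ k : Fin m, g (Sum.inl k) • c k with hx
    have hsum2 : (∑ i : {i // i ∈ G}, g (Sum.inr i) • u i.1) = ∑ i : Fin d, b i • u i := by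
      have h1 : ∀ i : {i // i ∈ G}, g (Sum.inr i) • u i.1 = b i.1 • u i.1 := by
        intro i; rw [hb]; simp [i.2]
      calc (∑ i : {i // i ∈ G}, g (Sum.inr i) • u i.1)
          = ∑ i : {i // i ∈ G}, b i.1 • u i.1 := Finset.sum_congr rfl (fun i _ => h1 i)
        _ = ∑ i ∈ G, b i • u i := Finset.sum_coe_sort G (fun i => b i • u i)
        _ = ∑ i : Fin d, b i • u i :=
            Finset.sum_subset (Finset.subset_univ G) (fun i _ hi => by simp [hb, hi])
    rw [hsum2] at hg
    have hbu : (∑ i : Fin d, b i • u i) = -x := eq_neg_of_add_eq_zero_right hg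
    have hca : ∀ k, star (c k) ⬝ᵥ x = g (Sum.inl k) :=
      fun k => dot_expand c horth (fun k => g (Sum.inl k)) k
    have hub : ∀ i, star (u i) ⬝ᵥ x = -(b i) := by
      intro i
      have h0 := dot_expand u horthu b i
      rw [hbu, dotProduct_neg] at h0
      exact neg_eq_iff_eq_neg.mp h0
    have hMx : M *ᵥ x = ∑ k : Fin m, ((ν k : ℂ) * g (Sum.inl k)) • c k := by
      rw [hx, ← mulVecLin_apply, map_sum]
      refine Finset.sum_congr rfl fun k _ => ?_
      rw [_root_.map_smul, mulVecLin_apply, heigc k, smul_smul, mul_comm]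
    have E1 : star x ⬝ᵥ (M *ᵥ x)
        = ∑ k : Fin m, (ν k : ℂ) * ((Complex.normSq (g (Sum.inl k)) : ℝ) : ℂ) := by
      rw [hMx, dot_comb]
      refine Finset.sum_congr rfl fun k _ => ?_
      rw [hca k, mul_assoc, Complex.mul_conj]
    have E2 : star x ⬝ᵥ (M *ᵥ x)
        = ∑ i : Fin d, (μ i : ℂ) * ((Complex.normSq (b i) : ℝ) : ℂ) := by
      rw [spec_quadA horthu heigu x]
      refine Finset.sum_congr rfl fun i _ => ?_
      rw [hub i, Complex.normSq_neg]
    have N1 : star x ⬝ᵥ x = ∑ k : Fin m, ((Complex.normSq (g (Sum.inl k)) : ℝ) : ℂ) := by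
      nth_rewrite 2 [hx]
      rw [dot_comb]
      refine Finset.sum_congr rfl fun k _ => ?_
      rw [hca k, Complex.mul_conj]
    have N2 : star x ⬝ᵥ x = ∑ i : Fin d, ((Complex.normSq (b i) : ℝ) : ℂ) := by
      rw [spec_norm horthu x]
      refine Finset.sum_congr rfl fun i _ => ?_
      rw [hub i, Complex.normSq_neg]
    have hre : (∑ k : Fin m, ν k * Complex.normSq (g (Sum.inl k)))
        = ∑ i : Fin d, μ i * Complex.normSq (b i) := by
      exact_mod_cast E1.symm.trans E2
    have hnr : (∑ k : Fin m, Complex.normSq (g (Sum.inl k)))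
        = ∑ i : Fin d, Complex.normSq (b i) := by
      exact_mod_cast N1.symm.trans N2
    have hterm : ∀ i ∈ Finset.univ (α := Fin d), 0 ≤ (μ i - cc) * Complex.normSq (b i) := by
      intro i _
      by_cases hi : i ∈ G
      · exact mul_nonneg (by linarith [hμG i hi]) (Complex.normSq_nonneg _)
      · simp [hb, hi]
    have hsle : (∑ i : Fin d, (μ i - cc) * Complex.normSq (b i)) ≤ 0 := by
      have h1 : (∑ k : Fin m, ν k * Complex.normSq (g (Sum.inl k)))
          ≤ ∑ k : Fin m, cc * Complex.normSq (g (Sum.inl k)) :=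
        Finset.sum_le_sum fun k _ =>
          mul_le_mul_of_nonneg_right (hν k) (Complex.normSq_nonneg _)
      have expand : (∑ i : Fin d, (μ i - cc) * Complex.normSq (b i))
          = (∑ i : Fin d, μ i * Complex.normSq (b i))
            - cc * ∑ i : Fin d, Complex.normSq (b i) := by
        rw [Finset.mul_sum, ← Finset.sum_sub_distrib]
        exact Finset.sum_congr rfl fun i _ => by ring
      rw [expand, ← hre, ← hnr]
      have h2 : (∑ k : Fin m, cc * Complex.normSq (g (Sum.inl k)))
          = cc * ∑ k : Fin m, Complex.normSq (g (Sum.inl k)) :=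
        (Finset.mul_sum _ _ _).symm
      linarith
    have hzero : ∀ i ∈ Finset.univ (α := Fin d), (μ i - cc) * Complex.normSq (b i) = 0 :=
      (Finset.sum_eq_zero_iff_of_nonneg hterm).mp
        (le_antisymm hsle (Finset.sum_nonneg hterm))
    have hbz : ∀ i, b i = 0 := by
      intro i
      by_cases hi : i ∈ G
      · have hz := hzero i (Finset.mem_univ i)
        have hpos : 0 < μ i - cc := by linarith [hμG i hi]
        have hns : Complex.normSq (b i) = 0 := by
          rcases mul_eq_zero.mp hz with h | h
          · linarith
          · exact h
        exact Complex.normSq_eq_zero.mp hns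
      · simp [hb, hi]
    have hx0 : x = 0 := by
      have hz : (∑ i : Fin d, b i • u i) = 0 :=
        Finset.sum_eq_zero fun i _ => by rw [hbz i, zero_smul]
      rw [hz] at hbu
      exact neg_eq_zero.mp hbu.symm
    intro j
    rcases j with k | i
    · have h := hca k
      rw [hx0] at h
      simpa using h.symm
    · have h : b i.1 = 0 := hbz i.1
      rw [hb] at h
      simpa [i.2] using h
  have hcard := hli.fintype_card_le_finrank
  rw [Module.finrank_fintype_fun_eq_card, Fintype.card_fin] at hcard
  rw [Fintype.card_sum, Fintype.card_fin, Fintype.card_coe] at hcard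
  have hsplit : (Finset.univ.filter fun i => μ i ≤ cc).card + G.card = d := by
    rw [hG]
    have h3 := Finset.card_filter_add_card_filter_not
      (s := Finset.univ (α := Fin d)) (p := fun i => μ i ≤ cc)
    simpa [Finset.card_univ] using h3
  omega

lemma sorted_le_of_count {d : ℕ} {M : Matrix (Fin d) (Fin d) ℂ} (hM : M.IsHermitian)
    {cc : ℝ} {m : ℕ} (hm : m ≤ (Finset.univ.filter fun i => hM.eigenvalues i ≤ cc).card)
    (j : Fin d) (hj : (j : ℕ) < m) : sortedEig hM j ≤ cc := by
  classical
  by_contra hcon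
  push_neg at hcon
  have hmono : Monotone (sortedEig hM) := Tuple.monotone_sort hM.eigenvalues
  set σ := Tuple.sort hM.eigenvalues with hσ
  have hcardeq : (Finset.univ.filter fun i => hM.eigenvalues i ≤ cc)
      = (Finset.univ.filter fun j' => hM.eigenvalues (σ j') ≤ cc).image σ := by
    ext i
    simp only [Finset.mem_image, Finset.mem_filter, Finset.mem_univ, true_and]
    constructor
    · intro hi; exact ⟨σ.symm i, by simpa using hi, by simp⟩
    · rintro ⟨j', hj', rfl⟩; exact hj'
  have hsub : (Finset.univ.filter fun j' => hM.eigenvalues (σ j') ≤ cc)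
      ⊆ Finset.univ.filter fun j' : Fin d => j' < j := by
    intro j' hj'
    simp only [Finset.mem_filter, Finset.mem_univ, true_and] at hj' ⊢
    by_contra hge
    push_neg at hge
    have h1 : sortedEig hM j ≤ sortedEig hM j' := hmono hge
    have h2 : sortedEig hM j' = hM.eigenvalues (σ j') := rfl
    linarith
  have hle : (Finset.univ.filter fun i => hM.eigenvalues i ≤ cc).card ≤ (j : ℕ) := by
    rw [hcardeq, Finset.card_image_of_injective _ σ.injective]
    calc (Finset.univ.filter fun j' => hM.eigenvalues (σ j') ≤ cc).card
        ≤ (Finset.univ.filter fun j' : Fin d => j' < j).card := Finset.card_le_card hsub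
      _ = (j : ℕ) := by
          rw [show (Finset.univ.filter fun j' : Fin d => j' < j) = Finset.Iio j from by ext; simp,
            Fin.card_Iio]
  omega


end Aux

/-- Theorem 2.4(i) of the paper: in the interpolation setting (the isometry `V` contains the
eigenvectors of `A` for its `ℓ` smallest eigenvalues, `U = V ⬝ [w 0 … w (r-1)]` from orthonormal
eigenvectors of `Vᴴ A V` for its `r` smallest eigenvalues, `ρ = ‖(I − U Uᴴ) A U‖`,
`a = λ_min(Vᴴ A V)`), for every `η ≥ λ_1` the lower-bound value
`f(η) = min{a, η} − 2ρ²/(|a − η| + √(|a − η|² + 4ρ²))` equals `λ_1` (division by zero yields `0`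
in `ℝ`, matching the stated convention). -/
theorem lower_bound_interpolates_smallest_eigenvalue
    (n d ℓ r : ℕ) (hr : 1 ≤ r) (hrl : r ≤ ℓ) (hld : ℓ ≤ d) (hdn : d ≤ n)
    (A : Matrix (Fin n) (Fin n) ℂ) (hA : A.IsHermitian)
    (lam : Fin n → ℝ) (hmono : Monotone lam)
    (v : Fin n → EuclideanSpace ℂ (Fin n)) (hv : Orthonormal ℂ v)
    (heig : ∀ k : Fin n, A *ᵥ v k = (lam k : ℂ) • v k)
    (V : Matrix (Fin n) (Fin d) ℂ) (hV : Vᴴ * V = 1)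
    (hcol : ∀ k : Fin n, (k : ℕ) < ℓ → ∃ c : Fin d → ℂ, V *ᵥ c = v k)
    (hred : (Vᴴ * A * V).IsHermitian)
    (w : Fin r → EuclideanSpace ℂ (Fin d)) (hw : Orthonormal ℂ w)
    (hweig : ∀ i : Fin r,
      (Vᴴ * A * V) *ᵥ w i = (sortedEig hred (Fin.castLE (hrl.trans hld) i) : ℂ) • w i)
    (U : Matrix (Fin n) (Fin r) ℂ) (hU : U = V * Matrix.of (fun p q => w q p))
    (ρ a : ℝ) (hρ : ρ = ‖(1 - U * Uᴴ) * A * U‖) (ha : a = ⨅ i, hred.eigenvalues i) :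
    ∀ η : ℝ, lam ⟨0, by omega⟩ ≤ η →
      min a η - 2 * ρ ^ 2 / (|a - η| + Real.sqrt (|a - η| ^ 2 + 4 * ρ ^ 2)) =
        lam ⟨0, by omega⟩ := by
  classical
  intro η hη
  have hn : 0 < n := by omega
  have hd : 0 < d := by omega
  have hl : 0 < ℓ := by omega
  -- function versions of the orthonormal families
  set vv : Fin n → Fin n → ℂ := fun k => v k with hvv
  set ww : Fin r → Fin d → ℂ := fun i => w i with hww
  have horthv : ∀ j k, star (vv j) ⬝ᵥ vv k = if j = k then 1 else 0 := by
    intro j k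
    have := orthonormal_iff_ite.mp hv j k
    rw [EuclideanSpace.inner_eq_star_dotProduct] at this; rw [dotProduct_comm]; exact this
  have horthw : ∀ j k, star (ww j) ⬝ᵥ ww k = if j = k then 1 else 0 := by
    intro j k
    have := orthonormal_iff_ite.mp hw j k
    rw [EuclideanSpace.inner_eq_star_dotProduct] at this; rw [dotProduct_comm]; exact this
  have heigv : ∀ k, A *ᵥ vv k = (lam k : ℂ) • vv k := fun k => heig k
  set M : Matrix (Fin d) (Fin d) ℂ := Vᴴ * A * V with hM
  set μ : Fin d → ℝ := hred.eigenvalues with hμ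
  set θ : Fin r → ℝ := fun i => sortedEig hred (Fin.castLE (hrl.trans hld) i) with hθ
  have hMw : ∀ i, M *ᵥ ww i = (θ i : ℂ) • ww i := fun i => hweig i
  have hln : ℓ ≤ n := hld.trans hdn
  -- the eigenvector family inside Col V
  have hc : ∀ k : Fin ℓ, ∃ c : Fin d → ℂ, V *ᵥ c = vv (Fin.castLE hln k) :=
    fun k => hcol (Fin.castLE hln k) (by simpa using k.2)
  set c : Fin ℓ → Fin d → ℂ := fun k => Classical.choose (hc k) with hcd
  have hVc : ∀ k, V *ᵥ c k = vv (Fin.castLE hln k) := fun k => Classical.choose_spec (hc k)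
  have horthc : ∀ j k, star (c j) ⬝ᵥ c k = if j = k then 1 else 0 := by
    intro j k
    rw [← iso_dot hV, hVc, hVc, horthv]
    simp [Fin.castLE_inj]
  have heigc : ∀ k, M *ᵥ c k = ((lam (Fin.castLE hln k) : ℝ) : ℂ) • c k := by
    intro k
    have h1 : Vᴴ *ᵥ vv (Fin.castLE hln k) = c k := by
      rw [← hVc k, mulVec_mulVec, hV, one_mulVec]
    calc M *ᵥ c k = Vᴴ *ᵥ (A *ᵥ (V *ᵥ c k)) := by
          rw [mulVec_mulVec, mulVec_mulVec]
      _ = Vᴴ *ᵥ ((lam (Fin.castLE hln k) : ℂ) • vv (Fin.castLE hln k)) := by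
          rw [hVc k, heigv]
      _ = (lam (Fin.castLE hln k) : ℂ) • (Vᴴ *ᵥ vv (Fin.castLE hln k)) := mulVec_smul _ _ _
      _ = _ := by rw [h1]
  -- counting: at least ℓ eigenvalues of M are ≤ lam (ℓ-1)
  set lastl : Fin n := ⟨ℓ - 1, by omega⟩ with hlastl
  have hcount : ℓ ≤ (Finset.univ.filter fun i => μ i ≤ lam lastl).card := by
    refine counting hred c horthc (fun k => lam (Fin.castLE hln k)) heigc (lam lastl) ?_
    intro k
    refine hmono ?_
    simp only [Fin.le_def, hlastl, Fin.coe_castLE]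
    omega
  have hθle : ∀ i : Fin r, θ i ≤ lam lastl := by
    intro i
    refine sorted_le_of_count hred hcount _ ?_
    simpa using lt_of_lt_of_le i.2 hrl
  -- the smallest eigenvalue of A
  set lam0 : ℝ := lam ⟨0, by omega⟩ with hlam0
  have hlam0le : ∀ k : Fin n, lam0 ≤ lam k := fun k => hmono (by simp [Fin.le_def])
  -- a ≥ lam0
  have halam : lam0 ≤ a := by
    haveI : Nonempty (Fin d) := ⟨⟨0, hd⟩⟩
    rw [ha]
    refine le_ciInf fun i => ?_
    set u : Fin d → ℂ := fun p => hred.eigenvectorBasis i p with hu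
    have huu : star u ⬝ᵥ u = 1 := by
      have := orthonormal_iff_ite.mp hred.eigenvectorBasis.orthonormal i i
      rw [EuclideanSpace.inner_eq_star_dotProduct, if_pos rfl] at this
      rw [dotProduct_comm]; exact this
    have hMu : M *ᵥ u = (μ i : ℂ) • u := by
      have := hred.mulVec_eigenvectorBasis i
      rw [RCLike.real_smul_eq_coe_smul (K := ℂ)] at this
      exact this
    set z : Fin n → ℂ := V *ᵥ u with hz
    have hq1 : star z ⬝ᵥ (A *ᵥ z) = ((μ i : ℝ) : ℂ) := by
      rw [hz, adj_dot', mulVec_mulVec, mulVec_mulVec, ← hM, hMu,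
        dotProduct_smul, huu, smul_eq_mul, mul_one]
    have hq2 : star z ⬝ᵥ z = 1 := by rw [hz, iso_dot hV, huu]
    have hs1 : star z ⬝ᵥ (A *ᵥ z)
        = ∑ k, (lam k : ℂ) * ((Complex.normSq (star (vv k) ⬝ᵥ z) : ℝ) : ℂ) :=
      spec_quadA horthv heigv z
    have hs2 : star z ⬝ᵥ z = ∑ k, ((Complex.normSq (star (vv k) ⬝ᵥ z) : ℝ) : ℂ) :=
      spec_norm horthv z
    have hr1 : (μ i : ℝ) = ∑ k, lam k * Complex.normSq (star (vv k) ⬝ᵥ z) := by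
      exact_mod_cast hq1.symm.trans hs1
    have hr2 : (1 : ℝ) = ∑ k, Complex.normSq (star (vv k) ⬝ᵥ z) := by
      exact_mod_cast hq2.symm.trans hs2
    calc lam0 = lam0 * 1 := (mul_one _).symm
      _ = ∑ k, lam0 * Complex.normSq (star (vv k) ⬝ᵥ z) := by rw [hr2, Finset.mul_sum]
      _ ≤ ∑ k, lam k * Complex.normSq (star (vv k) ⬝ᵥ z) :=
          Finset.sum_le_sum fun k _ =>
            mul_le_mul_of_nonneg_right (hlam0le k) (Complex.normSq_nonneg _)
      _ = μ i := hr1.symm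
  -- a ≤ lam0
  have haleam : a ≤ lam0 := by
    have h0 : (0 : ℕ) < ℓ := hl
    set k0 : Fin ℓ := ⟨0, h0⟩ with hk0
    have hcast : Fin.castLE hln k0 = ⟨0, hn⟩ := by ext; simp [hk0]
    have h1 : M *ᵥ c k0 = (lam0 : ℂ) • c k0 := by
      rw [heigc k0, hcast]
    have hone : star (c k0) ⬝ᵥ c k0 = 1 := by simpa using horthc k0 k0
    have hcount1 : 1 ≤ (Finset.univ.filter fun i => μ i ≤ lam0).card := by
      refine counting hred (fun _ : Fin 1 => c k0) (fun j k => ?_) (fun _ => lam0)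
        (fun _ => h1) lam0 (fun _ => le_refl _)
      have : j = k := Subsingleton.elim j k
      simp [this, hone]
    obtain ⟨i, hi⟩ := Finset.card_pos.mp (lt_of_lt_of_le one_pos hcount1)
    rw [Finset.mem_filter] at hi
    rw [ha]
    exact le_trans (ciInf_le (Set.Finite.bddBelow (Set.finite_range μ)) i) hi.2
  have ha0 : a = lam0 := le_antisymm haleam halam
  -- Step A : the columns of U are eigenvectors of A
  have hAx : ∀ i : Fin r, A *ᵥ (V *ᵥ ww i) = ((θ i : ℝ) : ℂ) • (V *ᵥ ww i) := by
    intro i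
    set x : Fin n → ℂ := V *ᵥ ww i with hx
    have hPAx : (V * Vᴴ * A * V) *ᵥ ww i = ((θ i : ℝ) : ℂ) • x := by
      have h1 : V *ᵥ (M *ᵥ ww i) = ((θ i : ℝ) : ℂ) • x := by
        rw [hMw i, mulVec_smul, hx]
      rw [← h1, mulVec_mulVec, hM]
      congr 1
      simp only [Matrix.mul_assoc]
    -- coefficient equations for small k
    have hsmall : ∀ k : Fin n, (k : ℕ) < ℓ →
        (lam k : ℂ) * (star (vv k) ⬝ᵥ x) = ((θ i : ℝ) : ℂ) * (star (vv k) ⬝ᵥ x) := by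
      intro k hk
      set k' : Fin ℓ := ⟨k.1, hk⟩ with hk'
      have hck : V *ᵥ c k' = vv k := by
        rw [hVc k']
        congr 1
      have hAv : star (vv k) ⬝ᵥ (A *ᵥ x) = (lam k : ℂ) * (star (vv k) ⬝ᵥ x) := by
        rw [adj_dot, hA.eq, heigv k, star_smul, smul_dotProduct]
        simp [Complex.conj_ofReal]
      have hmat : Vᴴ * (V * Vᴴ * A * V) = Vᴴ * A * V := by
        simp only [← Matrix.mul_assoc]
        rw [hV, Matrix.one_mul]
      have hproj : star (vv k) ⬝ᵥ ((V * Vᴴ * A * V) *ᵥ ww i)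
          = star (vv k) ⬝ᵥ (A *ᵥ x) := by
        rw [← hck, adj_dot', adj_dot', hx, mulVec_mulVec, mulVec_mulVec, mulVec_mulVec, hmat]
      have := hproj.symm.trans (by rw [hPAx, dotProduct_smul, smul_eq_mul])
      rw [hAv] at this
      exact this
    -- quadratic identities
    have hq1 : star x ⬝ᵥ (A *ᵥ x) = ((θ i : ℝ) : ℂ) := by
      rw [hx, adj_dot', mulVec_mulVec, mulVec_mulVec, ← hM, hMw i,
        dotProduct_smul, horthw i i, smul_eq_mul]
      simp
    have hq2 : star x ⬝ᵥ x = 1 := by rw [hx, iso_dot hV, horthw i i]; simp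
    have hr1 : (θ i : ℝ) = ∑ k, lam k * Complex.normSq (star (vv k) ⬝ᵥ x) := by
      exact_mod_cast hq1.symm.trans (spec_quadA horthv heigv x)
    have hr2 : (1 : ℝ) = ∑ k, Complex.normSq (star (vv k) ⬝ᵥ x) := by
      exact_mod_cast hq2.symm.trans (spec_norm horthv x)
    set t : Fin n → ℝ := fun k => (lam k - θ i) * Complex.normSq (star (vv k) ⬝ᵥ x) with ht
    have htsum : ∑ k, t k = 0 := by
      have : ∑ k, t k = (∑ k, lam k * Complex.normSq (star (vv k) ⬝ᵥ x))
          - θ i * ∑ k, Complex.normSq (star (vv k) ⬝ᵥ x) := by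
        rw [Finset.mul_sum, ← Finset.sum_sub_distrib]
        exact Finset.sum_congr rfl fun k _ => by rw [ht]; ring
      rw [this, ← hr1, ← hr2]
      ring
    have htzero : ∀ k : Fin n, (k : ℕ) < ℓ → t k = 0 := by
      intro k hk
      have h2 : ((lam k : ℂ) - ((θ i : ℝ) : ℂ)) * (star (vv k) ⬝ᵥ x) = 0 := by
        rw [sub_mul, hsmall k hk, sub_self]
      rcases mul_eq_zero.mp h2 with h3 | h3
      · have : lam k - θ i = 0 := by exact_mod_cast h3
        rw [ht]
        simp [this]
      · rw [ht]
        simp [h3]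
    have htnonneg : ∀ k ∈ Finset.univ (α := Fin n), 0 ≤ t k := by
      intro k _
      by_cases hk : (k : ℕ) < ℓ
      · rw [htzero k hk]
      · have hkl : lastl ≤ k := by
          simp only [Fin.le_def, hlastl]
          omega
        have : θ i ≤ lam k := le_trans (hθle i) (hmono hkl)
        exact mul_nonneg (by linarith) (Complex.normSq_nonneg _)
    have hall : ∀ k ∈ Finset.univ (α := Fin n), t k = 0 :=
      (Finset.sum_eq_zero_iff_of_nonneg htnonneg).mp htsum
    refine spec_eigvec horthv heigv x _ fun k => ?_
    have h4 := hall k (Finset.mem_univ k)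
    rw [ht] at h4
    rcases mul_eq_zero.mp h4 with h5 | h5
    · have h6 : (lam k : ℂ) = ((θ i : ℝ) : ℂ) := by
        have : lam k = θ i := by linarith
        exact_mod_cast this
      rw [h6]
    · have h6 : star (vv k) ⬝ᵥ x = 0 := Complex.normSq_eq_zero.mp h5
      rw [h6, mul_zero, mul_zero]
  -- ρ = 0
  set Θ : Matrix (Fin r) (Fin r) ℂ := Matrix.diagonal (fun i => ((θ i : ℝ) : ℂ)) with hΘ
  have hUcol : ∀ p i, U p i = (V *ᵥ ww i) p := by
    intro p i
    rw [hU]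
    simp [Matrix.mul_apply, mulVec, dotProduct, hww]
  have hAU : A * U = U * Θ := by
    ext p i
    have h1 : (A * U) p i = (A *ᵥ (V *ᵥ ww i)) p := by
      simp only [Matrix.mul_apply, mulVec, dotProduct]
      exact Finset.sum_congr rfl fun j _ => by rw [hUcol j i]; rfl
    rw [h1, hAx i, hΘ, Matrix.mul_diagonal]
    simp [hUcol p i, mul_comm]
  have hUU : Uᴴ * U = 1 := by
    ext i j
    have h1 : (Uᴴ * U) i j = star (V *ᵥ ww i) ⬝ᵥ (V *ᵥ ww j) := by
      simp only [Matrix.mul_apply, conjTranspose_apply, dotProduct, Pi.star_apply]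
      exact Finset.sum_congr rfl fun p _ => by rw [hUcol p i, hUcol p j]
    rw [h1, iso_dot hV, horthw i j, Matrix.one_apply]
  have hzero : (1 - U * Uᴴ) * A * U = 0 := by
    have h2 : U * Uᴴ * A * U = A * U := by
      calc U * Uᴴ * A * U = U * (Uᴴ * (A * U)) := by
            rw [Matrix.mul_assoc, Matrix.mul_assoc]
        _ = U * ((Uᴴ * U) * Θ) := by rw [hAU, Matrix.mul_assoc]
        _ = U * Θ := by rw [hUU, Matrix.one_mul]
        _ = A * U := hAU.symm
    rw [Matrix.sub_mul, Matrix.sub_mul, Matrix.one_mul, h2, sub_self]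
  have hρ0 : ρ = 0 := by rw [hρ, hzero, norm_zero]
  rw [hρ0, ha0]
  have hmin : min lam0 η = lam0 := min_eq_left hη
  rw [hmin]
  norm_num
end

section
/- Let D be a nonempty set, (μ_k)_{k≥1} a sequence in D, and (H_k)_{k≥1}, (E_k)_{k≥1} sequences of functions D → ℝ satisfying, for all k ≥ 1: (a) 0 ≤ E_k(μ) ≤ H_k(μ) for all μ ∈ D; (b) H_{k+1}(μ) ≤ H_k(μ) for all μ ∈ D; (c) H_k(μ_i) = 0 for all 1 ≤ i ≤ k; (d) H_k(ν) ≤ H_k(μ_{k+1}) for all ν ∈ D. If μ_j = μ_{j+ℓ} for some indices j ≥ 1 and ℓ ≥ 1, then for every integer m ≥ ℓ − 1 and every μ ∈ D one has H_{j+m}(μ) = 0 and E_{j+m}(μ) = 0. -/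
/-! At step `k = j + ℓ - 1` the greedy sample is `μ_{k+1} = μ_j`, where `H_k` vanishes by
interpolation. Since `μ_{k+1}` maximizes `H_k ≥ 0`, this forces `H_k ≡ 0`; monotonicity in `k`
keeps every later `H` at zero, and `0 ≤ E ≤ H` squeezes `E` to zero as well. -/

theorem eq_zero_of_nonneg_of_le_apply_eq_zero {α β : Type*} [PartialOrder β] [Zero β]
    {f : α → β} {a : α} (hf : 0 ≤ f) (hmax : ∀ x, f x ≤ f a) (ha : f a = 0) : f = 0 :=
  funext fun x => le_antisymm ((hmax x).trans ha.le) (hf x)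

theorem eq_zero_of_antitone_from {γ : Type*} [PartialOrder γ] [Zero γ] {h : ℕ → γ} {k : ℕ}
    (hnonneg : ∀ n, k ≤ n → 0 ≤ h n) (hanti : ∀ n, k ≤ n → h (n + 1) ≤ h n) (hk : h k = 0)
    {n : ℕ} (hn : k ≤ n) : h n = 0 := by
  induction n, hn using Nat.le_induction with
  | base => exact hk
  | succ n hkn ih => exact le_antisymm (ih ▸ hanti n hkn) (hnonneg _ (hkn.trans n.le_succ))

theorem surrogate_error_zero_of_stagnation_general
    (D : Type*) (μ : ℕ → D) (H E : ℕ → D → ℝ)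
    (ha : ∀ k, 1 ≤ k → ∀ x : D, 0 ≤ E k x ∧ E k x ≤ H k x)
    (hb : ∀ k, 1 ≤ k → ∀ x : D, H (k + 1) x ≤ H k x)
    (hc : ∀ k, 1 ≤ k → ∀ i, 1 ≤ i → i ≤ k → H k (μ i) = 0)
    (hd : ∀ k, 1 ≤ k → ∀ x : D, H k x ≤ H k (μ (k + 1)))
    (j ℓ : ℕ) (hj : 1 ≤ j) (hℓ : 1 ≤ ℓ) (heq : μ j = μ (j + ℓ)) :
    ∀ m, ℓ - 1 ≤ m → ∀ x : D, H (j + m) x = 0 ∧ E (j + m) x = 0 := by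
  intro m hm x
  have hH_nonneg : ∀ k, 1 ≤ k → 0 ≤ H k := fun k hk y => (ha k hk y).1.trans (ha k hk y).2
  set k := j + (ℓ - 1)
  have hk : 1 ≤ k := by omega
  have hH_next : H k (μ (k + 1)) = 0 := by
    rw [show k + 1 = j + ℓ by omega, ← heq]
    exact hc k hk j hj (by omega)
  have hHk : H k = 0 := eq_zero_of_nonneg_of_le_apply_eq_zero (hH_nonneg k hk) (hd k hk) hH_next
  have hHm : H (j + m) x = 0 := congrFun (eq_zero_of_antitone_from
    (fun n hn => hH_nonneg n (by omega)) (fun n hn => hb n (by omega)) hHk (by omega : k ≤ j + m)) x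
  obtain ⟨hE_nonneg, hE_le⟩ := ha (j + m) (by omega) x
  exact ⟨hHm, le_antisymm (hHm ▸ hE_le) hE_nonneg⟩

/-- Theorem 4.1 of the paper (abstract form): if the surrogate errors `H_k` dominate the actual
errors `E_k ≥ 0`, decrease monotonically in `k`, vanish at the previously sampled points, and are
maximized at the next sample point, then stagnation of the sample sequence (`μ_j = μ_{j+ℓ}`)
forces `H_{j+m} ≡ 0` and `E_{j+m} ≡ 0` for all `m ≥ ℓ − 1`. -/
theorem surrogate_error_zero_of_stagnation
    (D : Type*) [Nonempty D] (μ : ℕ → D) (H E : ℕ → D → ℝ)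
    (ha : ∀ k, 1 ≤ k → ∀ x : D, 0 ≤ E k x ∧ E k x ≤ H k x)
    (hb : ∀ k, 1 ≤ k → ∀ x : D, H (k + 1) x ≤ H k x)
    (hc : ∀ k, 1 ≤ k → ∀ i, 1 ≤ i → i ≤ k → H k (μ i) = 0)
    (hd : ∀ k, 1 ≤ k → ∀ x : D, H k x ≤ H k (μ (k + 1)))
    (j ℓ : ℕ) (hj : 1 ≤ j) (hℓ : 1 ≤ ℓ) (heq : μ j = μ (j + ℓ)) :
    ∀ m, ℓ - 1 ≤ m → ∀ x : D, H (j + m) x = 0 ∧ E (j + m) x = 0 :=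
  surrogate_error_zero_of_stagnation_general D μ H E ha hb hc hd j ℓ hj hℓ heq
end

section
/- Let p ≥ 1, let D ⊆ ℝ^p be a nonempty compact set, let γ > 0, let (μ_k)_{k≥1} be a sequence in D, and let (H_k)_{k≥1}, (E_k)_{k≥1} be sequences of functions D → ℝ satisfying, for all k ≥ 1: (a) 0 ≤ E_k(μ) ≤ H_k(μ) for all μ ∈ D; (b) H_{k+1}(μ) ≤ H_k(μ) for all μ ∈ D; (c) H_k(μ_i) = 0 for all 1 ≤ i ≤ k; (d) H_k(ν) ≤ H_k(μ_{k+1}) for all ν ∈ D; (e) |H_k(μ) − H_k(ν)| ≤ γ‖μ − ν‖ for all μ, ν ∈ D (the same γ for every k). Then lim_{k→∞} H_k(μ_{k+1}) = 0, lim_{k→∞} E_k(μ_{k+1}) = 0, and the actual error decays to zero uniformly: for every ε > 0 there exists K such that E_k(μ) ≤ ε for all k ≥ K and all μ ∈ D. -/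
/-!
The greedy values `H_k(μ_{k+1})` are nonnegative (they dominate `H_k(μ_1) = 0`) and decrease in
`k`. Since `H_j` vanishes at every earlier sample `μ_i` and is `γ`-Lipschitz, the greedy value
`H_j(μ_{j+1})` is at most `γ ‖μ_{j+1} - μ_i‖`. In the compact set `D` the samples cannot stay
uniformly apart, so the greedy values become arbitrarily small, and by monotonicity they tend
to `0`. As `H_k(μ_{k+1})` bounds `H_k`, hence `E_k`, on all of `D`, the convergence of `E_k` is
uniform.
-/

open Filter Topology

theorem IsCompact.exists_lt_and_dist_lt {X : Type*} [PseudoMetricSpace X] {D : Set X}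
    (hD : IsCompact D) {u : ℕ → X} (hu : ∀ n, u n ∈ D) {ε : ℝ} (hε : 0 < ε) :
    ∃ i j, i < j ∧ dist (u j) (u i) < ε := by
  obtain ⟨_, -, φ, hφ, hlim⟩ := hD.tendsto_subseq hu
  obtain ⟨N, hN⟩ := Metric.cauchySeq_iff'.mp hlim.cauchySeq ε hε
  exact ⟨φ N, φ (N + 1), hφ N.lt_succ_self, hN (N + 1) N.le_succ⟩

theorem tendsto_zero_of_antitone_of_nonneg {a : ℕ → ℝ} (ha : Antitone a) (h0 : ∀ n, 0 ≤ a n)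
    (hsmall : ∀ δ > 0, ∃ n, a n < δ) : Tendsto a atTop (𝓝 0) := by
  refine tendsto_order.2 ⟨fun b hb => .of_forall fun n => hb.trans_le (h0 n), fun δ hδ => ?_⟩
  obtain ⟨N, hN⟩ := hsmall δ hδ
  exact eventually_atTop.2 ⟨N, fun n hn => (ha hn).trans_lt hN⟩

section Greedy

variable {X : Type*} {D : Set X} {h : ℕ → X → ℝ} {x : ℕ → X}

theorem greedy_value_nonneg (hx : ∀ n, x n ∈ D) (hzero : ∀ n i, i ≤ n → h n (x i) = 0)
    (hmax : ∀ n, ∀ y ∈ D, h n y ≤ h n (x (n + 1))) (n : ℕ) : 0 ≤ h n (x (n + 1)) :=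
  hzero n 0 n.zero_le ▸ hmax n (x 0) (hx 0)

theorem antitone_greedy_value (hx : ∀ n, x n ∈ D) (hmono : ∀ n, ∀ y ∈ D, h (n + 1) y ≤ h n y)
    (hmax : ∀ n, ∀ y ∈ D, h n y ≤ h n (x (n + 1))) : Antitone fun n => h n (x (n + 1)) :=
  antitone_nat_of_succ_le fun n =>
    (hmono n _ (hx (n + 2))).trans (hmax n _ (hx (n + 2)))

variable [PseudoMetricSpace X]

theorem greedy_value_le_mul_dist {K : NNReal} (hx : ∀ n, x n ∈ D)
    (hzero : ∀ n i, i ≤ n → h n (x i) = 0) (hlip : ∀ n, LipschitzOnWith K (h n) D)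
    {n i : ℕ} (hin : i ≤ n) : h n (x (n + 1)) ≤ K * dist (x (n + 1)) (x i) :=
  calc h n (x (n + 1)) ≤ dist (h n (x (n + 1))) (h n (x i)) := by
        rw [hzero n i hin, Real.dist_eq, sub_zero]
        exact le_abs_self _
    _ ≤ K * dist (x (n + 1)) (x i) := (hlip n).dist_le_mul _ (hx _) _ (hx _)

theorem exists_greedy_value_lt {K : NNReal} (hD : IsCompact D) (hx : ∀ n, x n ∈ D)
    (hzero : ∀ n i, i ≤ n → h n (x i) = 0) (hlip : ∀ n, LipschitzOnWith K (h n) D)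
    {δ : ℝ} (hδ : 0 < δ) : ∃ n, h n (x (n + 1)) < δ := by
  have hK : (0 : ℝ) < K + 1 := by positivity
  obtain ⟨i, j, hij, hdist⟩ :=
    hD.exists_lt_and_dist_lt (u := fun n => x (n + 1)) (fun n => hx _) (div_pos hδ hK)
  refine ⟨j, (greedy_value_le_mul_dist hx hzero hlip hij).trans_lt ?_⟩
  calc (K : ℝ) * dist (x (j + 1)) (x (i + 1)) ≤ (K + 1) * dist (x (j + 1)) (x (i + 1)) := by
        gcongr; exact le_add_of_nonneg_right zero_le_one
    _ < δ := (lt_div_iff₀' hK).mp hdist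

theorem tendsto_greedy_value_zero {K : NNReal} (hD : IsCompact D) (hx : ∀ n, x n ∈ D)
    (hmono : ∀ n, ∀ y ∈ D, h (n + 1) y ≤ h n y) (hzero : ∀ n i, i ≤ n → h n (x i) = 0)
    (hmax : ∀ n, ∀ y ∈ D, h n y ≤ h n (x (n + 1))) (hlip : ∀ n, LipschitzOnWith K (h n) D) :
    Tendsto (fun n => h n (x (n + 1))) atTop (𝓝 0) :=
  tendsto_zero_of_antitone_of_nonneg (antitone_greedy_value hx hmono hmax)
    (greedy_value_nonneg hx hzero hmax) fun _ hδ => exists_greedy_value_lt hD hx hzero hlip hδ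

end Greedy

theorem greedy_subspace_framework_converges_general
    (p : ℕ)
    (D : Set (EuclideanSpace ℝ (Fin p))) (hDc : IsCompact D)
    (γ : ℝ)
    (μ : ℕ → EuclideanSpace ℝ (Fin p)) (hμ : ∀ k, 1 ≤ k → μ k ∈ D)
    (H E : ℕ → EuclideanSpace ℝ (Fin p) → ℝ)
    (ha : ∀ k, 1 ≤ k → ∀ x ∈ D, 0 ≤ E k x ∧ E k x ≤ H k x)
    (hb : ∀ k, 1 ≤ k → ∀ x ∈ D, H (k + 1) x ≤ H k x)
    (hc : ∀ k, 1 ≤ k → ∀ i, 1 ≤ i → i ≤ k → H k (μ i) = 0)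
    (hd : ∀ k, 1 ≤ k → ∀ x ∈ D, H k x ≤ H k (μ (k + 1)))
    (he : ∀ k, 1 ≤ k → ∀ x ∈ D, ∀ y ∈ D, |H k x - H k y| ≤ γ * ‖x - y‖) :
    Filter.Tendsto (fun k => H k (μ (k + 1))) Filter.atTop (nhds 0) ∧
    Filter.Tendsto (fun k => E k (μ (k + 1))) Filter.atTop (nhds 0) ∧
    ∀ ε : ℝ, 0 < ε → ∃ K : ℕ, ∀ k, K ≤ k → ∀ x ∈ D, E k x ≤ ε := by
  have hlip (n : ℕ) : LipschitzOnWith γ.toNNReal (H (n + 1)) D :=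
    .of_dist_le' fun x hx y hy => by
      rw [Real.dist_eq, dist_eq_norm]
      exact he (n + 1) n.succ_pos x hx y hy
  have hH : Tendsto (fun k => H k (μ (k + 1))) atTop (𝓝 0) :=
    (tendsto_add_atTop_iff_nat 1).mp <| tendsto_greedy_value_zero hDc
      (fun n => hμ (n + 1) n.succ_pos) (fun n => hb (n + 1) n.succ_pos)
      (fun n i hin => hc (n + 1) n.succ_pos (i + 1) i.succ_pos (by omega))
      (fun n => hd (n + 1) n.succ_pos) hlip
  have hE : Tendsto (fun k => E k (μ (k + 1))) atTop (𝓝 0) := by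
    refine tendsto_of_tendsto_of_tendsto_of_le_of_le' tendsto_const_nhds hH ?_ ?_ <;>
    filter_upwards [eventually_ge_atTop 1] with k hk
    exacts [(ha k hk _ (hμ _ k.succ_pos)).1, (ha k hk _ (hμ _ k.succ_pos)).2]
  refine ⟨hH, hE, fun ε hε => eventually_atTop.mp ?_⟩
  filter_upwards [eventually_ge_atTop 1, hH.eventually (ge_mem_nhds hε)] with k hk hkε x hx
  exact (ha k hk x hx).2.trans ((hd k hk x hx).trans hkε)

/-- Theorem 4.2 of the paper (abstract form): on a nonempty compact set `D ⊆ ℝ^p`, if the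
surrogate errors `H_k` dominate the actual errors `E_k ≥ 0`, decrease monotonically in `k`,
vanish at the sampled points, are maximized at the next sample point, and are uniformly Lipschitz
with constant `γ`, then `H_k(μ_{k+1}) → 0`, `E_k(μ_{k+1}) → 0`, and the actual error decays to
zero uniformly on `D`. -/
theorem greedy_subspace_framework_converges
    (p : ℕ) (hp : 1 ≤ p)
    (D : Set (EuclideanSpace ℝ (Fin p))) (hDc : IsCompact D) (hDne : D.Nonempty)
    (γ : ℝ) (hγ : 0 < γ)
    (μ : ℕ → EuclideanSpace ℝ (Fin p)) (hμ : ∀ k, 1 ≤ k → μ k ∈ D)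
    (H E : ℕ → EuclideanSpace ℝ (Fin p) → ℝ)
    (ha : ∀ k, 1 ≤ k → ∀ x ∈ D, 0 ≤ E k x ∧ E k x ≤ H k x)
    (hb : ∀ k, 1 ≤ k → ∀ x ∈ D, H (k + 1) x ≤ H k x)
    (hc : ∀ k, 1 ≤ k → ∀ i, 1 ≤ i → i ≤ k → H k (μ i) = 0)
    (hd : ∀ k, 1 ≤ k → ∀ x ∈ D, H k x ≤ H k (μ (k + 1)))
    (he : ∀ k, 1 ≤ k → ∀ x ∈ D, ∀ y ∈ D, |H k x - H k y| ≤ γ * ‖x - y‖) :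
    Filter.Tendsto (fun k => H k (μ (k + 1))) Filter.atTop (nhds 0) ∧
    Filter.Tendsto (fun k => E k (μ (k + 1))) Filter.atTop (nhds 0) ∧
    ∀ ε : ℝ, 0 < ε → ∃ K : ℕ, ∀ k, K ≤ k → ∀ x ∈ D, E k x ≤ ε :=
  greedy_subspace_framework_converges_general p D hDc γ μ hμ H E ha hb hc hd he
end
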